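/- arXiv:1408.6096 — 8 statements merged into one kernel-verified Lean document; each statement's English description precedes it below -/
import Mathlib

section
/- Let G be a group and (G_n)_{n∈ℕ} a decreasing sequence of finite-index subgroups of G (i.e. G_{n+1} ≤ G_n for all n). Then the following three conditions are equivalent: (1) for every nontrivial element g ∈ G there exists n such that G_n ∩ {k g k⁻¹ h : k ∈ G, h ∈ G_n} = ∅; (2) ⋂_{n∈ℕ} ⋃_{k∈G} k G_n k⁻¹ = {1}; (3) for every finite subset F ⊆ G there exists n such that for every k ∈ G the map sending f ∈ F to the left coset (f·k)·G_n is injective on F. -/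
/-!
All three conditions say that every `g ≠ 1` eventually has no conjugate in `Gn n`. For (1) and (2)
this is a reformulation; for (3), two points `f ≠ f'` of `F` fall into the same coset of `Gn n`
after right translation by `k` exactly when `k⁻¹ (f⁻¹ f') k ∈ Gn n`, and since the sequence is
decreasing, finitely many such conditions hold simultaneously from some index on.
-/

open Filter QuotientGroup

section

variable {G : Type*} [Group G]

theorem inter_setOf_conj_mul_eq_empty_iff (H : Subgroup G) (g : G) :
    (H : Set G) ∩ {x : G | ∃ k : G, ∃ h ∈ H, x = k * g * k⁻¹ * h} = ∅ ↔
      ∀ k : G, k * g * k⁻¹ ∉ H := by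
  rw [Set.eq_empty_iff_forall_notMem]
  constructor
  · intro h k hk
    exact h _ ⟨hk, k, 1, H.one_mem, (mul_one _).symm⟩
  · rintro h x ⟨hx, k, y, hy, rfl⟩
    exact h k (by simpa using H.mul_mem hx (H.inv_mem hy))

theorem mem_iUnion_conj_image_iff (H : Subgroup G) (g : G) :
    g ∈ ⋃ k : G, (fun x => k * x * k⁻¹) '' (H : Set G) ↔ ∃ k : G, k * g * k⁻¹ ∈ H := by
  simp only [Set.mem_iUnion, Set.mem_image, SetLike.mem_coe]
  constructor
  · rintro ⟨k, x, hx, rfl⟩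
    exact ⟨k⁻¹, by simpa [mul_assoc] using hx⟩
  · rintro ⟨k, hk⟩
    exact ⟨k⁻¹, _, hk, by group⟩

theorem QuotientGroup.mk_mul_right_eq_mk_mul_right_iff (H : Subgroup G) (f f' k : G) :
    (mk (f * k) : G ⧸ H) = mk (f' * k) ↔ k⁻¹ * (f⁻¹ * f') * k ∈ H := by
  rw [QuotientGroup.eq]
  group

theorem iInter_iUnion_conj_image_eq_singleton_one_iff (Gn : ℕ → Subgroup G) :
    (⋂ n, ⋃ k : G, (fun x => k * x * k⁻¹) '' (Gn n : Set G)) = {1} ↔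
      ∀ g : G, g ≠ 1 → ∃ n, ∀ k : G, k * g * k⁻¹ ∉ Gn n := by
  have hone : (1 : G) ∈ ⋂ n, ⋃ k : G, (fun x => k * x * k⁻¹) '' (Gn n : Set G) :=
    Set.mem_iInter.2 fun n => (mem_iUnion_conj_image_iff _ _).2 ⟨1, by simp⟩
  simp only [Set.eq_singleton_iff_unique_mem, hone, true_and, Set.mem_iInter,
    mem_iUnion_conj_image_iff]
  refine forall_congr' fun g => ?_
  rw [not_imp_comm]
  push Not
  rfl

theorem exists_forall_injOn_mk_mul {Gn : ℕ → Subgroup G} (hanti : Antitone Gn)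
    (h : ∀ g : G, g ≠ 1 → ∃ n, ∀ k : G, k * g * k⁻¹ ∉ Gn n) (F : Finset G) :
    ∃ n, ∀ k : G, Set.InjOn (fun f : G => (mk (f * k) : G ⧸ Gn n)) F := by
  have hev : ∀ g : G, g ≠ 1 → ∀ᶠ n in atTop, ∀ k : G, k * g * k⁻¹ ∉ Gn n := by
    intro g hg
    obtain ⟨n, hn⟩ := h g hg
    exact eventually_atTop.2 ⟨n, fun m hm k hk => hn k (hanti hm hk)⟩
  have hF : ∀ᶠ n in atTop, ∀ f ∈ F, ∀ f' ∈ F, f ≠ f' → ∀ k : G, k * (f⁻¹ * f') * k⁻¹ ∉ Gn n := by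
    refine (eventually_all_finset F).2 fun f _ => (eventually_all_finset F).2 fun f' _ => ?_
    by_cases hff' : f = f'
    · exact Eventually.of_forall fun _ hne => absurd hff' hne
    · exact (hev _ (by rwa [Ne, inv_mul_eq_one])).mono fun _ hn _ => hn
  obtain ⟨n, hn⟩ := hF.exists
  refine ⟨n, fun k f hf f' hf' heq => ?_⟩
  by_contra hne
  rw [mk_mul_right_eq_mk_mul_right_iff] at heq
  exact hn f hf f' hf' hne k⁻¹ (by simpa using heq)

theorem exists_forall_conj_notMem_of_injOn {Gn : ℕ → Subgroup G}
    (h : ∀ F : Finset G, ∃ n, ∀ k : G, Set.InjOn (fun f : G => (mk (f * k) : G ⧸ Gn n)) F)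
    (g : G) (hg : g ≠ 1) : ∃ n, ∀ k : G, k * g * k⁻¹ ∉ Gn n := by
  classical
  obtain ⟨n, hn⟩ := h {1, g}
  refine ⟨n, fun k hk => hg ?_⟩
  refine (hn k⁻¹ (by simp) (by simp) ?_).symm
  rw [mk_mul_right_eq_mk_mul_right_iff]
  simpa using hk

end

theorem stmt_0_general {G : Type*} [Group G] (Gn : ℕ → Subgroup G)
    (hdec : ∀ n, Gn (n + 1) ≤ Gn n) :
    List.TFAE
      [∀ g : G, g ≠ 1 → ∃ n, (Gn n : Set G) ∩
          {x : G | ∃ k : G, ∃ h ∈ Gn n, x = k * g * k⁻¹ * h} = ∅,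
       (⋂ n, ⋃ k : G, (fun x => k * x * k⁻¹) '' (Gn n : Set G)) = {1},
       ∀ F : Finset G, ∃ n, ∀ k : G,
          Set.InjOn (fun f : G => (QuotientGroup.mk (f * k) : G ⧸ Gn n)) ↑F] := by
  have h1 : (∀ g : G, g ≠ 1 → ∃ n, (Gn n : Set G) ∩
      {x : G | ∃ k : G, ∃ h ∈ Gn n, x = k * g * k⁻¹ * h} = ∅) ↔
        ∀ g : G, g ≠ 1 → ∃ n, ∀ k : G, k * g * k⁻¹ ∉ Gn n :=
    forall₂_congr fun g _ => exists_congr fun n => inter_setOf_conj_mul_eq_empty_iff (Gn n) g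
  tfae_have 1 ↔ 2 := h1.trans (iInter_iUnion_conj_image_eq_singleton_one_iff Gn).symm
  tfae_have 1 → 3 := fun h => exists_forall_injOn_mk_mul (antitone_nat_of_succ_le hdec) (h1.1 h)
  tfae_have 3 → 1 := fun h => h1.2 (exists_forall_conj_notMem_of_injOn h)
  tfae_finish

/-- Lemma 2.5 of Szabó–Wu–Zacharias: equivalent characterizations of a
semi-conjugacy-separating decreasing sequence of finite-index subgroups. -/
theorem stmt_0 {G : Type*} [Group G] (Gn : ℕ → Subgroup G)
    (hdec : ∀ n, Gn (n + 1) ≤ Gn n) (hfi : ∀ n, (Gn n).FiniteIndex) :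
    List.TFAE
      [∀ g : G, g ≠ 1 → ∃ n, (Gn n : Set G) ∩
          {x : G | ∃ k : G, ∃ h ∈ Gn n, x = k * g * k⁻¹ * h} = ∅,
       (⋂ n, ⋃ k : G, (fun x => k * x * k⁻¹) '' (Gn n : Set G)) = {1},
       ∀ F : Finset G, ∃ n, ∀ k : G,
          Set.InjOn (fun f : G => (QuotientGroup.mk (f * k) : G ⧸ Gn n)) ↑F] :=
  stmt_0_general Gn hdec
end

section
/- Let (X,d) be a metric space and H a group acting on X such that for every h ∈ H the map x ↦ h•x is an isometry. For x, y ∈ X define the quotient pseudometric between orbits by ρ(x,y) = inf{ d(h₁•x, h₂•y) : h₁, h₂ ∈ H }. Let x ∈ X and R > 0, and assume the orbit map is injective on the open ball B_{3R}(x): whenever x₁, x₂ ∈ B_{3R}(x) and h•x₁ = x₂ for some h ∈ H, then x₁ = x₂. Then: (i) ρ(x₁,x₂) = d(x₁,x₂) for all x₁, x₂ in the open ball B_R(x); and (ii) for every y ∈ X with ρ(x,y) < R there exists h ∈ H and x' ∈ B_R(x) with h•y = x'. In other words, the orbit-space projection restricted to B_R(x) is an isometry onto the ball of radius R around the orbit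 of x. -/
/-!
Translating by `h₁⁻¹` turns `d(h₁•a, h₂•b)` into `d(a, g•b)` with `g = h₁⁻¹h₂`, so the orbit
distance is `⨅ g, d(a, g•b)`. For `x₁, x₂ ∈ B_R(x)` a translate `g•x₂` closer to `x₁` than `x₂`
would lie within `d(x₁,x₂) + R < 3R` of `x`, and injectivity on `B_{3R}(x)` forces `g•x₂ = x₂`.
For part (ii), an orbit distance below `R` is witnessed by some `d(x, g•y) < R`.
-/

open Metric

section OrbitDistance

variable {X H : Type*} [PseudoMetricSpace X] [Group H] [MulAction H X]

theorem dist_smul_smul_eq_dist_smul [IsIsometricSMul H X] (h₁ h₂ : H) (a b : X) :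
    dist (h₁ • a) (h₂ • b) = dist a ((h₁⁻¹ * h₂) • b) := by
  rw [← dist_smul h₁⁻¹, inv_smul_smul, smul_smul]

theorem sInf_dist_smul_smul_eq_iInf [IsIsometricSMul H X] (a b : X) :
    sInf {r : ℝ | ∃ h₁ h₂ : H, r = dist (h₁ • a) (h₂ • b)} = ⨅ g : H, dist a (g • b) := by
  have hset : {r : ℝ | ∃ h₁ h₂ : H, r = dist (h₁ • a) (h₂ • b)} =
      Set.range fun g : H => dist a (g • b) := by
    ext r
    constructor
    · rintro ⟨h₁, h₂, rfl⟩
      exact ⟨h₁⁻¹ * h₂, (dist_smul_smul_eq_dist_smul h₁ h₂ a b).symm⟩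
    · rintro ⟨g, rfl⟩
      exact ⟨1, g, by rw [one_smul]⟩
  rw [hset, sInf_range]

theorem iInf_dist_smul_eq_dist {a b : X} (h : ∀ g : H, dist a b ≤ dist a (g • b)) :
    ⨅ g : H, dist a (g • b) = dist a b :=
  le_antisymm
    (ciInf_le_of_le ⟨0, by rintro _ ⟨g, rfl⟩; exact dist_nonneg⟩ 1 (by rw [one_smul]))
    (le_ciInf h)

theorem dist_le_dist_smul_of_injOn_ball {x : X} {R : ℝ}
    (hinj : ∀ x₁ ∈ ball x (3 * R), ∀ x₂ ∈ ball x (3 * R), (∃ h : H, h • x₁ = x₂) → x₁ = x₂)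
    {x₁ x₂ : X} (hx₁ : x₁ ∈ ball x R) (hx₂ : x₂ ∈ ball x R) (g : H) :
    dist x₁ x₂ ≤ dist x₁ (g • x₂) := by
  rw [mem_ball] at hx₁ hx₂
  by_contra! hcloser
  have hx₁x₂ : dist x₁ x₂ < 2 * R := by linarith [dist_triangle_right x₁ x₂ x]
  have hgx₂ : g • x₂ ∈ ball x (3 * R) := by
    rw [mem_ball]
    linarith [dist_triangle_left (g • x₂) x x₁]
  have hx₂' : x₂ ∈ ball x (3 * R) := by
    rw [mem_ball]
    linarith [dist_nonneg (x := x₁) (y := x)]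
  rw [← hinj x₂ hx₂' (g • x₂) hgx₂ ⟨g, rfl⟩] at hcloser
  exact lt_irrefl _ hcloser

end OrbitDistance

theorem stmt_3_general {X : Type*} [MetricSpace X] {H : Type*} [Group H] [MulAction H X]
    (hiso : ∀ h : H, Isometry (fun x : X => h • x))
    (x : X) (R : ℝ)
    (hinj : ∀ x₁ ∈ Metric.ball x (3 * R), ∀ x₂ ∈ Metric.ball x (3 * R),
      (∃ h : H, h • x₁ = x₂) → x₁ = x₂) :
    (∀ x₁ ∈ Metric.ball x R, ∀ x₂ ∈ Metric.ball x R,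
      sInf {r : ℝ | ∃ h₁ h₂ : H, r = dist (h₁ • x₁) (h₂ • x₂)} = dist x₁ x₂) ∧
    (∀ y : X, sInf {r : ℝ | ∃ h₁ h₂ : H, r = dist (h₁ • x) (h₂ • y)} < R →
      ∃ h : H, ∃ x' ∈ Metric.ball x R, h • y = x') := by
  have : IsIsometricSMul H X := ⟨hiso⟩
  refine ⟨fun x₁ hx₁ x₂ hx₂ => ?_, fun y hy => ?_⟩
  · rw [sInf_dist_smul_smul_eq_iInf]
    exact iInf_dist_smul_eq_dist (dist_le_dist_smul_of_injOn_ball hinj hx₁ hx₂)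
  · rw [sInf_dist_smul_smul_eq_iInf] at hy
    obtain ⟨g, hg⟩ := exists_lt_of_ciInf_lt hy
    exact ⟨g, g • y, mem_ball'.mpr hg, rfl⟩

/-- Lemma on injectivity radius vs. isometry radius: if the orbit projection of an
isometric group action is injective on `B_{3R}(x)`, then on `B_R(x)` the quotient
pseudometric agrees with the metric, and the projection maps `B_R(x)` onto the
ball of radius `R` around the orbit of `x`. -/
theorem stmt_3 {X : Type*} [MetricSpace X] {H : Type*} [Group H] [MulAction H X]
    (hiso : ∀ h : H, Isometry (fun x : X => h • x))
    (x : X) (R : ℝ) (hR : 0 < R)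
    (hinj : ∀ x₁ ∈ Metric.ball x (3 * R), ∀ x₂ ∈ Metric.ball x (3 * R),
      (∃ h : H, h • x₁ = x₂) → x₁ = x₂) :
    (∀ x₁ ∈ Metric.ball x R, ∀ x₂ ∈ Metric.ball x R,
      sInf {r : ℝ | ∃ h₁ h₂ : H, r = dist (h₁ • x₁) (h₂ • x₂)} = dist x₁ x₂) ∧
    (∀ y : X, sInf {r : ℝ | ∃ h₁ h₂ : H, r = dist (h₁ • x) (h₂ • y)} < R →
      ∃ h : H, ∃ x' ∈ Metric.ball x R, h • y = x') :=
  stmt_3_general hiso x R hinj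
end

section
/- Let G be a countable group, (G_n)_{n∈ℕ} a decreasing sequence of finite-index subgroups of G, and s ∈ ℕ. Suppose that for every ε > 0 and every finite M ⊆ G there exist n ∈ ℕ and finitely supported functions μ^{(l)} : G → [0,1], l = 0,…,s, satisfying: (a) supp(μ^{(l)}) ∩ (supp(μ^{(l)})·h) = ∅ for every l and every h ∈ G_n with h ≠ 1; (b) ∑_{l=0}^{s} ∑_{h∈G_n} μ^{(l)}(g·h) = 1 for every g ∈ G; (c) sup_{x∈G} |μ^{(l)}(x) − μ^{(l)}(g·x)| ≤ ε for every l and every g ∈ M. Then (G_n) is semi-conjugacy-separating: for every finite subset F ⊆ G there exists n such that for every k ∈ G, the map sending f ∈ F to the left coset (f·k)·G_n is injective on F. -/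
/-!
Suppose `a ≠ b` in `F` and `(a * k) Gₙ = (b * k) Gₙ`, so `g := a⁻¹ * b ≠ 1` and `k⁻¹ g k ∈ Gₙ`; then
left multiplication by `g` maps the coset `k Gₙ` to itself without fixed points. Condition (a)
says that `supp μ⁽ˡ⁾` meets each left coset of `Gₙ` in at most one point `x`. If `μ⁽ˡ⁾(x) > ε`,
then by (c) also `μ⁽ˡ⁾(g x) > 0`, a second support point in the same coset. Hence each inner sum
in (b) at `k` is at most `ε`, and (b) fails once `(s + 1) ε < 1`, for `M = F⁻¹ F`.
-/

open Function
open scoped Pointwise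

section

variable {G M : Type*} [Group G]

def SupportDisjointFromTranslates [Zero M] (H : Subgroup G) (f : G → M) : Prop :=
  ∀ h ∈ H, h ≠ 1 → support f ∩ (fun x => x * h) '' support f = ∅

namespace SupportDisjointFromTranslates

variable {H : Subgroup G}

theorem eq_of_inv_mul_mem [Zero M] {f : G → M} (hf : SupportDisjointFromTranslates H f)
    {x y : G} (hx : f x ≠ 0) (hy : f y ≠ 0) (hxy : x⁻¹ * y ∈ H) : x = y := by
  by_contra hne
  have hdisj := hf _ hxy (fun h => hne (inv_mul_eq_one.mp h))
  exact (Set.eq_empty_iff_forall_notMem.mp hdisj) y ⟨hy, x, hx, by group⟩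

theorem exists_finsum_eq [AddCommMonoid M] {f : G → M} (hf : SupportDisjointFromTranslates H f)
    (k : G) : ∃ h₀ : H, ∑ᶠ h : H, f (k * h) = f (k * h₀) := by
  by_cases hzero : ∀ h : H, f (k * h) = 0
  · exact ⟨1, by rw [finsum_eq_zero_of_forall_eq_zero hzero, hzero]⟩
  push Not at hzero
  obtain ⟨h₀, hh₀⟩ := hzero
  refine ⟨h₀, finsum_eq_single _ h₀ fun h hne => ?_⟩
  by_contra hh
  refine hne (Subtype.ext (mul_left_cancel (hf.eq_of_inv_mul_mem hh hh₀ ?_)))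
  simpa [mul_assoc] using H.mul_mem (H.inv_mem h.2) h₀.2

theorem finsum_le_of_abs_sub_le {f : G → ℝ} (hf : SupportDisjointFromTranslates H f)
    {g k : G} (hg : g ≠ 1) (hconj : k⁻¹ * g * k ∈ H) {ε : ℝ}
    (hε : ∀ x, |f x - f (g * x)| ≤ ε) : ∑ᶠ h : H, f (k * h) ≤ ε := by
  obtain ⟨h₀, hsum⟩ := hf.exists_finsum_eq k
  rw [hsum]
  by_contra! hlarge
  set x := k * (h₀ : G)
  have hx : f x ≠ 0 := by linarith [abs_nonneg (f x - f (g * x)), hε x]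
  have hgx : f (g * x) ≠ 0 := by linarith [(abs_le.mp (hε x)).2]
  have hmem : x⁻¹ * (g * x) ∈ H := by
    simpa [x, mul_assoc] using H.mul_mem (H.mul_mem (H.inv_mem h₀.2) hconj) h₀.2
  exact hg (mul_eq_right.mp (hf.eq_of_inv_mul_mem hx hgx hmem).symm)

end SupportDisjointFromTranslates

end

theorem stmt_5_general {G : Type*} [Group G]
    (Gn : ℕ → Subgroup G) (s : ℕ)
    (hB : ∀ ε > (0 : ℝ), ∀ M : Finset G, ∃ n : ℕ, ∃ μ : Fin (s + 1) → G → ℝ,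
        (∀ l, (Function.support (μ l)).Finite) ∧
        (∀ l x, μ l x ∈ Set.Icc (0 : ℝ) 1) ∧
        (∀ l, ∀ h ∈ Gn n, h ≠ 1 →
          Function.support (μ l) ∩ ((fun x => x * h) '' Function.support (μ l)) = ∅) ∧
        (∀ g : G, ∑ l : Fin (s + 1), ∑ᶠ h : (Gn n), μ l (g * (h : G)) = 1) ∧
        (∀ l, ∀ g ∈ M, ∀ x : G, |μ l x - μ l (g * x)| ≤ ε)) :
    ∀ F : Finset G, ∃ n : ℕ, ∀ k : G,
      Set.InjOn (fun f : G => (QuotientGroup.mk (f * k) : G ⧸ Gn n)) ↑F := by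
  classical
  intro F
  obtain ⟨n, μ, -, -, hsep, hsum, hclose⟩ := hB (1 / (s + 2)) (by positivity) (F⁻¹ * F)
  refine ⟨n, fun k a ha b hb hab => by_contra fun hne => ?_⟩
  have hg : a⁻¹ * b ≠ 1 := fun h => hne (inv_mul_eq_one.mp h)
  have hconj : k⁻¹ * (a⁻¹ * b) * k ∈ Gn n := by
    simpa [QuotientGroup.eq, mul_assoc] using hab
  have hgM : a⁻¹ * b ∈ F⁻¹ * F := Finset.mul_mem_mul (Finset.inv_mem_inv ha) hb
  have hbound :
      ∑ l : Fin (s + 1), ∑ᶠ h : Gn n, μ l (k * h) ≤ ∑ _l : Fin (s + 1), 1 / (s + 2 : ℝ) :=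
    Finset.sum_le_sum fun l _ =>
      SupportDisjointFromTranslates.finsum_le_of_abs_sub_le (hsep l) hg hconj (hclose l _ hgM)
  rw [hsum k, Finset.sum_const, Finset.card_univ, Fintype.card_fin, nsmul_eq_mul] at hbound
  push_cast at hbound
  rw [mul_one_div, le_div_iff₀ (by positivity)] at hbound
  linarith

/-- The partition-of-unity condition (3) of the decay-functions lemma implies that
the sequence is semi-conjugacy-separating (in the injectivity-on-cosets form). -/
theorem stmt_5 {G : Type*} [Group G] [Countable G]
    (Gn : ℕ → Subgroup G) (hdec : ∀ n, Gn (n + 1) ≤ Gn n)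
    (hfi : ∀ n, (Gn n).FiniteIndex) (s : ℕ)
    (hB : ∀ ε > (0 : ℝ), ∀ M : Finset G, ∃ n : ℕ, ∃ μ : Fin (s + 1) → G → ℝ,
        (∀ l, (Function.support (μ l)).Finite) ∧
        (∀ l x, μ l x ∈ Set.Icc (0 : ℝ) 1) ∧
        (∀ l, ∀ h ∈ Gn n, h ≠ 1 →
          Function.support (μ l) ∩ ((fun x => x * h) '' Function.support (μ l)) = ∅) ∧
        (∀ g : G, ∑ l : Fin (s + 1), ∑ᶠ h : (Gn n), μ l (g * (h : G)) = 1) ∧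
        (∀ l, ∀ g ∈ M, ∀ x : G, |μ l x - μ l (g * x)| ≤ ε)) :
    ∀ F : Finset G, ∃ n : ℕ, ∀ k : G,
      Set.InjOn (fun f : G => (QuotientGroup.mk (f * k) : G ⧸ Gn n)) ↑F :=
  stmt_5_general Gn s hB
end

section
/- Let G be a topological group, H a closed subgroup of G whose induced subspace topology is discrete, and H' a subgroup of G with H' ≤ H. Suppose there exists a compact subset K ⊆ G such that G = K·H', i.e. every g ∈ G can be written as g = k·h with k ∈ K and h ∈ H'. Then H' has finite index in H: the set of left cosets of H' in H is finite. -/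
/-!
Since `H` is closed and discrete, it meets the compact set `K` in a finite set. Every `h ∈ H`
is `k * h'` with `k ∈ K`, `h' ∈ H'`, and then `k = h * h'⁻¹ ∈ H`; so the finitely many
points of `H ∩ K` represent all cosets of `H'` in `H`.
-/

theorem IsCompact.finite_inter_of_isClosed_of_isDiscrete {X : Type*} [TopologicalSpace X]
    {K S : Set X} (hK : IsCompact K) (hS : IsClosed S) (hd : IsDiscrete S) :
    (S ∩ K).Finite :=
  (hK.inter_left hS).finite (hd.mono Set.inter_subset_left)

theorem Subgroup.finiteIndex_subgroupOf_of_finite_mul_cover {G : Type*} [Group G]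
    {H H' : Subgroup G} (hle : H' ≤ H) {S : Set G} (hS : S.Finite)
    (hcover : ∀ h ∈ H, ∃ s ∈ S, ∃ h' ∈ H', h = s * h') :
    (H'.subgroupOf H).FiniteIndex := by
  have : Finite (H ⧸ H'.subgroupOf H) := by
    have : Finite ((↑) ⁻¹' S : Set H) := hS.preimage Subtype.val_injective.injOn
    refine Finite.of_surjective (fun s : ((↑) ⁻¹' S : Set H) => (s.1 : H ⧸ H'.subgroupOf H)) ?_
    rintro ⟨h⟩
    obtain ⟨s, hs, h', hh', hh⟩ := hcover h h.2
    have hsH : s ∈ H := (H.mul_mem_cancel_right (hle hh')).mp (hh ▸ h.2)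
    refine ⟨⟨⟨s, hsH⟩, hs⟩, QuotientGroup.eq.mpr ?_⟩
    simpa [Subgroup.mem_subgroupOf, hh] using hh'
  exact finiteIndex_of_finite_quotient

theorem stmt_10_general {G : Type*} [Group G] [TopologicalSpace G]
    (H H' : Subgroup G) (hle : H' ≤ H)
    (hclosed : IsClosed (H : Set G)) (hdisc : DiscreteTopology H)
    (K : Set G) (hK : IsCompact K)
    (hcover : ∀ g : G, ∃ k ∈ K, ∃ h ∈ H', g = k * h) :
    (H'.subgroupOf H).FiniteIndex := by
  have hfin : ((H : Set G) ∩ K).Finite :=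
    hK.finite_inter_of_isClosed_of_isDiscrete hclosed (isDiscrete_iff_discreteTopology.mpr hdisc)
  refine Subgroup.finiteIndex_subgroupOf_of_finite_mul_cover hle hfin fun h hh => ?_
  obtain ⟨k, hk, h', hh', rfl⟩ := hcover h
  exact ⟨k, ⟨(H.mul_mem_cancel_right (hle hh')).mp hh, hk⟩, h', hh', rfl⟩

/-- If `H` is a closed discrete subgroup of a topological group `G` and `H' ≤ H`
is cocompact in `G` (i.e. `G = K·H'` for a compact `K`), then `H'` has finite
index in `H`. -/
theorem stmt_10 {G : Type*} [Group G] [TopologicalSpace G] [IsTopologicalGroup G]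
    (H H' : Subgroup G) (hle : H' ≤ H)
    (hclosed : IsClosed (H : Set G)) (hdisc : DiscreteTopology H)
    (K : Set G) (hK : IsCompact K)
    (hcover : ∀ g : G, ∃ k ∈ K, ∃ h ∈ H', g = k * h) :
    (H'.subgroupOf H).FiniteIndex :=
  stmt_10_general H H' hle hclosed hdisc K hK hcover
end

section
/- Let G be a topological group and H ≤ G a closed subgroup with discrete induced topology that is cocompact, i.e. there is a compact set K ⊆ G with G = K·H. Let (σ_n)_{n∈ℕ} be a sequence of group automorphisms of G that are homeomorphisms, such that: (a) σ_n(H) ⊆ H for every n; and (b) for every compact set K' ⊆ G and every open neighbourhood U of the identity there exists n with K' ⊆ (σ_n ∘ σ_{n-1} ∘ ⋯ ∘ σ_0)(U). Set H_n = (σ_n ∘ σ_{n-1} ∘ ⋯ ∘ σ_0)(H). Then: (i) each H_n is a subgroup of H of finite index in H; and (ii) ⋂_{n∈ℕ} H_n = {1}. In particular, for every h ∈ H with h ≠ 1 there is a finite-index subgroup of H not containing h, so H is residually finite. -/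
/-!
Pulling the cocompactness `G = K·H` forward along `φ = σ_n ∘ ⋯ ∘ σ_0` gives `G = φ(K)·φ(H)`, so
every coset of `φ(H)` in `H` meets the compact set `φ(K)` in a point of `H`; since `H` is closed
and discrete, only finitely many points of `H` lie in `φ(K)`. For the intersection, pick an open
`V` with `V ∩ H = {1}`: an element `x` of every `φ(H)` lies in some `φ(V)` by expansion, and the
injectivity of `φ` puts `φ⁻¹(x)` in `V ∩ H`.
-/

/-- The composition `σ_n ∘ σ_{n-1} ∘ ⋯ ∘ σ_0` of a sequence of automorphisms. -/
def comps {G : Type*} [Group G] (σ : ℕ → G ≃* G) : ℕ → G ≃* G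
  | 0 => σ 0
  | n + 1 => (comps σ n).trans (σ (n + 1))

section comps

variable {G : Type*} [Group G] (σ : ℕ → G ≃* G)

theorem continuous_comps [TopologicalSpace G] (hσ : ∀ n, Continuous (σ n)) (n : ℕ) :
    Continuous (comps σ n) := by
  induction n with
  | zero => exact hσ 0
  | succ n ih => exact (hσ (n + 1)).comp ih

theorem map_comps_le {H : Subgroup G} (hH : ∀ n, H.map (σ n).toMonoidHom ≤ H) (n : ℕ) :
    H.map (comps σ n).toMonoidHom ≤ H := by
  induction n with
  | zero => exact hH 0
  | succ n ih =>
    rintro _ ⟨y, hy, rfl⟩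
    exact hH (n + 1) ⟨comps σ n y, ih ⟨y, hy, rfl⟩, rfl⟩

end comps

theorem exists_mul_mem_map_of_forall_exists_mul_mem {G : Type*} [Group G] (φ : G ≃* G)
    {K : Set G} {H : Subgroup G}
    (hKH : ∀ g : G, ∃ k ∈ K, ∃ h ∈ H, g = k * h) (g : G) :
    ∃ k ∈ φ '' K, ∃ h ∈ H.map φ.toMonoidHom, g = k * h := by
  obtain ⟨k, hk, h, hh, hg⟩ := hKH (φ.symm g)
  exact ⟨φ k, ⟨k, hk, rfl⟩, φ h, ⟨h, hh, rfl⟩, by rw [← map_mul, ← hg, φ.apply_symm_apply]⟩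

section DiscreteSubgroup

variable {G : Type*} [Group G] [TopologicalSpace G]

theorem finite_preimage_val_of_isCompact {H : Subgroup G} (hclosed : IsClosed (H : Set G))
    [DiscreteTopology H] {K : Set G} (hK : IsCompact K) :
    ((↑) ⁻¹' K : Set H).Finite :=
  (hclosed.isClosedEmbedding_subtypeVal.isCompact_preimage hK).finite_of_discrete

theorem finiteIndex_subgroupOf_of_isCompact {H L : Subgroup G} (hclosed : IsClosed (H : Set G))
    [DiscreteTopology H] (hLH : L ≤ H) {K : Set G} (hK : IsCompact K)
    (hKL : ∀ g : G, ∃ k ∈ K, ∃ l ∈ L, g = k * l) :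
    (L.subgroupOf H).FiniteIndex := by
  have : Finite ((↑) ⁻¹' K : Set H) := (finite_preimage_val_of_isCompact hclosed hK).to_subtype
  have hsurj : Function.Surjective
      (fun t : ((↑) ⁻¹' K : Set H) => (t.1 : H ⧸ L.subgroupOf H)) := by
    intro q
    induction q using QuotientGroup.induction_on with
    | H h =>
      obtain ⟨k, hk, l, hl, hkl⟩ := hKL h
      have hkH : k ∈ H := by
        simpa [hkl] using H.mul_mem h.2 (H.inv_mem (hLH hl))
      refine ⟨⟨⟨k, hkH⟩, hk⟩, QuotientGroup.eq.mpr ?_⟩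
      rw [Subgroup.mem_subgroupOf]
      simpa [hkl] using hl
  have : Finite (H ⧸ L.subgroupOf H) := Finite.of_surjective _ hsurj
  exact Subgroup.finiteIndex_of_finite_quotient

theorem exists_isOpen_preimage_val_eq_one (H : Subgroup G) [DiscreteTopology H] :
    ∃ V : Set G, IsOpen V ∧ ((↑) ⁻¹' V : Set H) = {1} :=
  isOpen_induced_iff.mp (isOpen_discrete ({1} : Set H))

theorem iInter_map_eq_one {ι : Type*} (H : Subgroup G) [DiscreteTopology H] (φ : ι → G ≃* G)
    (hφ : ∀ (x : G) (U : Set G), IsOpen U → (1 : G) ∈ U → ∃ i, x ∈ φ i '' U) :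
    ⋂ i, ((H.map (φ i).toMonoidHom : Subgroup G) : Set G) = {1} := by
  obtain ⟨V, hV, hVH⟩ := exists_isOpen_preimage_val_eq_one H
  have h1V : (1 : G) ∈ V := show (1 : H) ∈ ((↑) ⁻¹' V : Set H) from hVH ▸ rfl
  refine subset_antisymm (fun x hx => ?_) (by simp)
  obtain ⟨i, u, hu, rfl⟩ := hφ x V hV h1V
  obtain ⟨h, hh, hhu⟩ := Set.mem_iInter.mp hx i
  obtain rfl : h = u := (φ i).injective hhu
  have : (⟨h, hh⟩ : H) ∈ ((↑) ⁻¹' V : Set H) := hu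
  rw [hVH, Set.mem_singleton_iff, Subgroup.mk_eq_one] at this
  simp [this]

end DiscreteSubgroup

theorem Subgroup.exists_finiteIndex_not_mem_of_iInter_eq_one {G ι : Type*} [Group G]
    {H : Subgroup G} {N : ι → Subgroup G} (hN : ∀ i, ((N i).subgroupOf H).FiniteIndex)
    (hinter : ⋂ i, (N i : Set G) = {1}) {h : H} (hh : h ≠ 1) :
    ∃ H' : Subgroup H, H'.FiniteIndex ∧ h ∉ H' := by
  obtain ⟨i, hi⟩ : ∃ i, (h : G) ∉ N i := by
    by_contra! hall
    exact hh (Subtype.ext (by simpa [hinter] using Set.mem_iInter.mpr hall))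
  exact ⟨(N i).subgroupOf H, hN i, hi⟩

theorem stmt_11_general {G : Type*} [Group G] [TopologicalSpace G] [IsTopologicalGroup G]
    (H : Subgroup G) (hclosed : IsClosed (H : Set G)) (hdisc : DiscreteTopology H)
    (K : Set G) (hK : IsCompact K)
    (hcocompact : ∀ g : G, ∃ k ∈ K, ∃ h ∈ H, g = k * h)
    (σ : ℕ → G ≃* G)
    (hcont : ∀ n, Continuous (σ n))
    (hH : ∀ n, Subgroup.map (σ n).toMonoidHom H ≤ H)
    (hexp : ∀ K' : Set G, IsCompact K' → ∀ U : Set G, IsOpen U → (1 : G) ∈ U →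
      ∃ n, K' ⊆ (comps σ n) '' U) :
    (∀ n, Subgroup.map (comps σ n).toMonoidHom H ≤ H) ∧
    (∀ n, ((Subgroup.map (comps σ n).toMonoidHom H).subgroupOf H).FiniteIndex) ∧
    (⋂ n, ((Subgroup.map (comps σ n).toMonoidHom H : Subgroup G) : Set G)) = {1} ∧
    (∀ h : H, h ≠ 1 → ∃ H' : Subgroup H, H'.FiniteIndex ∧ h ∉ H') := by
  have hfin (n : ℕ) : ((H.map (comps σ n).toMonoidHom).subgroupOf H).FiniteIndex :=
    finiteIndex_subgroupOf_of_isCompact hclosed (map_comps_le σ hH n)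
      (hK.image (continuous_comps σ hcont n))
      (exists_mul_mem_map_of_forall_exists_mul_mem (comps σ n) hcocompact)
  have hinter := iInter_map_eq_one H (comps σ) fun x U hU h1U =>
    (hexp {x} isCompact_singleton U hU h1U).imp fun _ hn => hn rfl
  exact ⟨map_comps_le σ hH, hfin, hinter,
    fun _ hh => Subgroup.exists_finiteIndex_not_mem_of_iInter_eq_one hfin hinter hh⟩

/-- Key criterion (Lemma 3.2): a closed, discrete, cocompact subgroup `H` of a
topological group admitting a sequence of expanding automorphisms preserving `H`
yields finite-index subgroups `H_n = (σ_n ∘ ⋯ ∘ σ_0)(H)` of `H` with trivial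
intersection; in particular `H` is residually finite. -/
theorem stmt_11 {G : Type*} [Group G] [TopologicalSpace G] [IsTopologicalGroup G]
    (H : Subgroup G) (hclosed : IsClosed (H : Set G)) (hdisc : DiscreteTopology H)
    (K : Set G) (hK : IsCompact K)
    (hcocompact : ∀ g : G, ∃ k ∈ K, ∃ h ∈ H, g = k * h)
    (σ : ℕ → G ≃* G)
    (hcont : ∀ n, Continuous (σ n)) (hcont' : ∀ n, Continuous (σ n).symm)
    (hH : ∀ n, Subgroup.map (σ n).toMonoidHom H ≤ H)
    (hexp : ∀ K' : Set G, IsCompact K' → ∀ U : Set G, IsOpen U → (1 : G) ∈ U →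
      ∃ n, K' ⊆ (comps σ n) '' U) :
    (∀ n, Subgroup.map (comps σ n).toMonoidHom H ≤ H) ∧
    (∀ n, ((Subgroup.map (comps σ n).toMonoidHom H).subgroupOf H).FiniteIndex) ∧
    (⋂ n, ((Subgroup.map (comps σ n).toMonoidHom H : Subgroup G) : Set G)) = {1} ∧
    (∀ h : H, h ≠ 1 → ∃ H' : Subgroup H, H'.FiniteIndex ∧ h ∉ H') :=
  stmt_11_general H hclosed hdisc K hK hcocompact σ hcont hH hexp
end

section
/- Let G be a finitely generated nilpotent group. Then there exists m ∈ ℕ (which can be taken to be 3^ℓ, where ℓ is the Hirsch length of G) such that for every finite subset M ⊆ G there exist a finite subset F ⊆ G containing the identity and elements g_1, …, g_m ∈ G with the property: for every g ∈ F⁻¹F = {f₁⁻¹·f₂ : f₁, f₂ ∈ F} there is j ∈ {1,…,m} such that M·g ⊆ g_j·F, i.e. for every a ∈ M there is f ∈ F with a·g = g_j·f. -/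
/-!
If `z` is central and `G ⧸ ⟨z⟩` admits translate covers with `m` translates, then `G` admits them
with `3 m`: with `σ` a section of the quotient map fixing `1`, take `σ(F) · {z ^ i : |i| ≤ 3C}`,
where `C` bounds the exponents of the finitely many central defects `z ^ e` produced by `M` and
the lifted data. A difference `z ^ u` with `|u| ≤ 6C` is absorbed by one of the three shifts
`z ^ (-4C), 1, z ^ (4C)` up to an error of at most `2C`, which leaves room for the defect.
A finitely generated nilpotent group is reached from the trivial group by finitely many such
steps: by Hall's commutator calculus the last nontrivial term of the lower central series is
central and generated by the finitely many left-normed commutators of the generators.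
-/

open Subgroup
open scoped Pointwise commutatorElement

section Central

variable {G : Type*} [Group G] {z : G}

theorem zpow_mul_comm_of_mem_center (hz : z ∈ center G) (k : ℤ) (x : G) :
    z ^ k * x = x * z ^ k :=
  mem_center_iff.mp (zpow_mem hz k) x |>.symm

theorem mul_zpow_inv_mul_mul_zpow (hz : z ∈ center G) (x y : G) (i j : ℤ) :
    (x * z ^ i)⁻¹ * (y * z ^ j) = x⁻¹ * y * z ^ (j - i) := by
  rw [mul_inv_rev, ← zpow_neg, mul_assoc, zpow_mul_comm_of_mem_center hz, sub_eq_add_neg,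
    zpow_add]
  group

theorem mul_zpow_mul_mul_zpow (hz : z ∈ center G) (x y : G) (i j : ℤ) :
    x * z ^ i * (y * z ^ j) = x * y * z ^ (i + j) := by
  rw [mul_assoc x, zpow_mul_comm_of_mem_center hz, zpow_add]
  group

theorem mul_inv_mul_eq_mul_zpow_mul_mul_zpow (hz : z ∈ center G) {a x y r s : G} {e : ℤ}
    (h : a * x⁻¹ * y = r * s * z ^ e) (i₁ i₂ d : ℤ) :
    a * ((x * z ^ i₁)⁻¹ * (y * z ^ i₂)) = r * z ^ d * (s * z ^ (e + (i₂ - i₁) - d)) := by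
  calc a * ((x * z ^ i₁)⁻¹ * (y * z ^ i₂)) = a * x⁻¹ * y * z ^ (i₂ - i₁) := by
        rw [mul_zpow_inv_mul_mul_zpow hz]; group
    _ = r * s * z ^ (d + (e + (i₂ - i₁) - d)) := by
        rw [h, mul_assoc _ (z ^ e), ← zpow_add]; congr 2; ring
    _ = r * z ^ d * (s * z ^ (e + (i₂ - i₁) - d)) := by rw [mul_zpow_mul_mul_zpow hz]

theorem Finset.exists_natAbs_bound_of_mem_zpowers (z : G) (s : Finset G) :
    ∃ C : ℕ, ∀ w ∈ s, w ∈ zpowers z → ∃ e : ℤ, e.natAbs ≤ C ∧ z ^ e = w := by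
  classical
  induction s using Finset.induction_on with
  | empty => exact ⟨0, by simp⟩
  | insert w s _ ih =>
    obtain ⟨C, hC⟩ := ih
    by_cases hw : w ∈ zpowers z
    · obtain ⟨e, rfl⟩ := mem_zpowers_iff.mp hw
      refine ⟨max C e.natAbs, fun v hv hvz => ?_⟩
      rcases Finset.mem_insert.mp hv with rfl | hv
      · exact ⟨e, le_max_right _ _, rfl⟩
      · obtain ⟨e', he', rfl⟩ := hC v hv hvz
        exact ⟨e', he'.trans (le_max_left _ _), rfl⟩
    · refine ⟨C, fun v hv hvz => ?_⟩
      rcases Finset.mem_insert.mp hv with rfl | hv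
      · exact absurd hvz hw
      · exact hC v hv hvz

theorem Subgroup.normal_of_le_center {N : Subgroup G} (hN : N ≤ center G) : N.Normal :=
  ⟨fun n hn g => by rwa [mem_center_iff.mp (hN hn) g, mul_inv_cancel_right]⟩

theorem MonoidHom.map_mem_center {H : Type*} [Group H] {f : G →* H}
    (hf : Function.Surjective f) {x : G} (hx : x ∈ center G) : f x ∈ center H := by
  refine mem_center_iff.mpr fun y => ?_
  obtain ⟨y, rfl⟩ := hf y
  rw [← map_mul, ← map_mul, mem_center_iff.mp hx y]

end Central

theorem Int.exists_fin_three_natAbs_sub_le (C : ℕ) {u : ℤ} (hu : u.natAbs ≤ 6 * C) :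
    ∃ t : Fin 3, (u - ((t : ℤ) - 1) * (4 * C)).natAbs ≤ 2 * C := by
  by_cases h₁ : u < -(2 * C : ℤ)
  · exact ⟨0, show (u - ((0 : ℤ) - 1) * (4 * C)).natAbs ≤ 2 * C by omega⟩
  by_cases h₂ : (2 * C : ℤ) < u
  · exact ⟨2, show (u - ((2 : ℤ) - 1) * (4 * C)).natAbs ≤ 2 * C by omega⟩
  · exact ⟨1, show (u - ((1 : ℤ) - 1) * (4 * C)).natAbs ≤ 2 * C by omega⟩

theorem MonoidHom.exists_rightInverse_map_one {G Q : Type*} [Group G] [Group Q] {π : G →* Q}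
    (hπ : Function.Surjective π) : ∃ σ : Q → G, Function.RightInverse σ π ∧ σ 1 = 1 := by
  classical
  refine ⟨Function.update (Function.surjInv hπ) 1 1, fun x => ?_, Function.update_self ..⟩
  by_cases hx : x = 1
  · simp [hx]
  · rw [Function.update_of_ne hx]; exact Function.surjInv_eq hπ x

section Commutators

variable {G : Type*} [Group G]

theorem commutatorElement_mem_of_mem_closure_left {X : Set G} {y : G} {T : Subgroup G}
    (hcen : ∀ x ∈ closure X, ⁅x, y⁆ ∈ center G) (hX : ∀ x ∈ X, ⁅x, y⁆ ∈ T) {x : G}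
    (hx : x ∈ closure X) : ⁅x, y⁆ ∈ T := by
  induction hx using closure_induction with
  | mem x hx => exact hX x hx
  | one => simp
  | mul x₁ x₂ hx₁ hx₂ ih₁ ih₂ =>
    have h : ⁅x₁ * x₂, y⁆ = x₁ * ⁅x₂, y⁆ * x₁⁻¹ * ⁅x₁, y⁆ := by
      simp only [commutatorElement_def]; group
    rw [h, mem_center_iff.mp (hcen x₂ hx₂) x₁, mul_inv_cancel_right]
    exact mul_mem ih₂ ih₁
  | inv x hx ih =>
    have h : ⁅x⁻¹, y⁆ = x⁻¹ * ⁅x, y⁆⁻¹ * x := by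
      simp only [commutatorElement_def]; group
    rw [h, mem_center_iff.mp (inv_mem (hcen x hx)) x⁻¹, inv_mul_cancel_right]
    exact inv_mem ih

theorem commutator_closure_le_closure_image2 {X Y : Set G}
    (h : ⁅closure X, closure Y⁆ ≤ center G) :
    ⁅closure X, closure Y⁆ ≤ closure (Set.image2 (⁅·, ·⁆) X Y) := by
  rw [commutator_le]
  intro x hx y hy
  refine commutatorElement_mem_of_mem_closure_left
    (fun x' hx' => h (commutator_mem_commutator hx' hy)) (fun x' hx' => ?_) hx
  rw [← commutatorElement_inv]
  refine inv_mem (commutatorElement_mem_of_mem_closure_left (fun y' hy' => ?_)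
    (fun y' hy' => ?_) hy)
  · rw [← commutatorElement_inv]
    exact inv_mem (h (commutator_mem_commutator (subset_closure hx') hy'))
  · rw [← commutatorElement_inv]
    exact inv_mem (subset_closure (Set.mem_image2_of_mem hx' hy'))

def leftNormedCommutators (S : Set G) : ℕ → Set G
  | 0 => S
  | k + 1 => Set.image2 (⁅·, ·⁆) (leftNormedCommutators S k) S

theorem leftNormedCommutators_finite {S : Set G} (hS : S.Finite) :
    ∀ k, (leftNormedCommutators S k).Finite
  | 0 => hS
  | k + 1 => (leftNormedCommutators_finite hS k).image2 _ hS

theorem leftNormedCommutators_subset_lowerCentralSeries (S : Set G) :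
    ∀ k, leftNormedCommutators S k ⊆ (⊤ : Subgroup G).lowerCentralSeries k
  | 0 => fun _ _ => mem_top _
  | k + 1 => by
    rintro _ ⟨x, hx, s, -, rfl⟩
    exact commutator_mem_commutator (leftNormedCommutators_subset_lowerCentralSeries S k hx)
      (mem_top s)

theorem MonoidHom.image_leftNormedCommutators {H : Type*} [Group H] (f : G →* H) (S : Set G) :
    ∀ k, f '' leftNormedCommutators S k = leftNormedCommutators (f '' S) k
  | 0 => rfl
  | k + 1 => by
    rw [leftNormedCommutators, leftNormedCommutators, ← image_leftNormedCommutators f S k]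
    exact Set.image_image2_distrib fun _ _ => map_commutatorElement f _ _

theorem lowerCentralSeries_succ_le_closure_image2 {S X : Set G} (hS : closure S = ⊤) {k : ℕ}
    (hk : (⊤ : Subgroup G).lowerCentralSeries (k + 2) = ⊥)
    (hX : X ⊆ (⊤ : Subgroup G).lowerCentralSeries k)
    (hgen : (⊤ : Subgroup G).lowerCentralSeries k ≤
      closure X ⊔ (⊤ : Subgroup G).lowerCentralSeries (k + 1)) :
    (⊤ : Subgroup G).lowerCentralSeries (k + 1) ≤ closure (Set.image2 (⁅·, ·⁆) X S) := by
  set Z := (⊤ : Subgroup G).lowerCentralSeries (k + 1)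
  have hZ : ∀ x ∈ Z, ∀ y : G, ⁅x, y⁆ = 1 := fun x hx y => by
    rw [← mem_bot, ← hk]; exact commutator_mem_commutator hx (mem_top y)
  have hXZ : closure (X ∪ Z) ≤ (⊤ : Subgroup G).lowerCentralSeries k :=
    closure_le _ |>.mpr (Set.union_subset hX (Subgroup.lowerCentralSeries_antitone _ k.le_succ))
  calc Z ≤ ⁅closure (X ∪ Z), closure S⁆ := by
        rw [hS, Subgroup.closure_union, closure_eq]; exact commutator_mono hgen le_rfl
    _ ≤ closure (Set.image2 (⁅·, ·⁆) (X ∪ Z) S) := by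
        refine commutator_closure_le_closure_image2 ((commutator_mono hXZ le_top).trans ?_)
        rw [← commutator_top_right_eq_bot_iff_le_center]; exact hk
    _ ≤ closure (Set.image2 (⁅·, ·⁆) X S) := by
        rw [Set.image2_union_left, Subgroup.closure_union]
        refine sup_le le_rfl (closure_le _ |>.mpr ?_)
        rintro _ ⟨x, hx, y, -, rfl⟩
        show ⁅x, y⁆ ∈ _
        rw [hZ x hx y]; exact one_mem _

theorem map_top_lowerCentralSeries {H : Type*} [Group H] {f : G →* H}
    (hf : Function.Surjective f) (k : ℕ) :
    ((⊤ : Subgroup G).lowerCentralSeries k).map f = (⊤ : Subgroup H).lowerCentralSeries k := by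
  rw [map_lowerCentralSeries, map_top_of_surjective f hf]

theorem lowerCentralSeries_le_closure_leftNormedCommutators_sup {S : Set G}
    (hS : closure S = ⊤) (k : ℕ) :
    (⊤ : Subgroup G).lowerCentralSeries k ≤
      closure (leftNormedCommutators S k) ⊔ (⊤ : Subgroup G).lowerCentralSeries (k + 1) := by
  induction k with
  | zero => exact hS ▸ le_sup_left
  | succ k ih =>
    set N := (⊤ : Subgroup G).lowerCentralSeries (k + 2)
    let π := QuotientGroup.mk' N
    have hπ : Function.Surjective π := QuotientGroup.mk'_surjective N
    rw [← QuotientGroup.ker_mk' N, ← Subgroup.map_le_map_iff, map_top_lowerCentralSeries hπ,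
      MonoidHom.map_closure, MonoidHom.image_leftNormedCommutators, leftNormedCommutators,
      ← MonoidHom.image_leftNormedCommutators]
    refine lowerCentralSeries_succ_le_closure_image2 ?_ ?_ ?_ ?_
    · rw [← MonoidHom.map_closure, hS, map_top_of_surjective π hπ]
    · rw [← map_top_lowerCentralSeries hπ, Subgroup.map_eq_bot_iff, QuotientGroup.ker_mk']
    · rw [← map_top_lowerCentralSeries hπ, coe_map]
      exact Set.image_mono (leftNormedCommutators_subset_lowerCentralSeries S k)
    · rw [← map_top_lowerCentralSeries hπ, ← map_top_lowerCentralSeries hπ,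
        ← MonoidHom.map_closure, ← Subgroup.map_sup]
      exact map_mono ih

end Commutators

def HasTranslateCovers (G : Type*) [Group G] (m : ℕ) : Prop :=
  ∀ M : Finset G, ∃ F : Finset G, (1 : G) ∈ F ∧ ∃ g : Fin m → G,
    ∀ f₁ ∈ F, ∀ f₂ ∈ F, ∃ j : Fin m, ∀ a ∈ M, ∃ f ∈ F, a * (f₁⁻¹ * f₂) = g j * f

namespace HasTranslateCovers

variable {G Q : Type*} [Group G] [Group Q] {m : ℕ}

theorem of_subsingleton [Subsingleton G] : HasTranslateCovers G 1 := fun _ =>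
  ⟨{1}, Finset.mem_singleton_self 1, fun _ => 1, fun _ _ _ _ =>
    ⟨0, fun _ _ => ⟨1, Finset.mem_singleton_self 1, Subsingleton.elim _ _⟩⟩⟩

theorem of_mulEquiv (e : Q ≃* G) (h : HasTranslateCovers Q m) : HasTranslateCovers G m := by
  classical
  intro M
  obtain ⟨F, h1F, g, hcov⟩ := h (M.image e.symm)
  refine ⟨F.image e, Finset.mem_image.mpr ⟨1, h1F, map_one e⟩, e ∘ g, ?_⟩
  simp only [Finset.forall_mem_image]
  intro f₁ hf₁ f₂ hf₂
  obtain ⟨j, hj⟩ := hcov f₁ hf₁ f₂ hf₂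
  refine ⟨j, fun a ha => ?_⟩
  obtain ⟨f, hf, hfa⟩ := hj (e.symm a) (Finset.mem_image_of_mem _ ha)
  refine ⟨e f, Finset.mem_image_of_mem e hf, ?_⟩
  simpa using congrArg e hfa

theorem of_surjective_of_ker_le_zpowers {π : G →* Q} (hπ : Function.Surjective π) {z : G}
    (hz : z ∈ center G) (hker : π.ker ≤ zpowers z) (h : HasTranslateCovers Q m) :
    HasTranslateCovers G (3 * m) := by
  classical
  intro M
  obtain ⟨Fq, h1Fq, gq, hcov⟩ := h (M.image π)
  obtain ⟨σ, hσ, hσ1⟩ := MonoidHom.exists_rightInverse_map_one hπ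
  set A := Fq.image σ
  set D := (Finset.univ.image (σ ∘ gq) * A)⁻¹ * (M * A⁻¹ * A)
  obtain ⟨C, hC⟩ := Finset.exists_natAbs_bound_of_mem_zpowers z D
  let shift (t : Fin 3) : ℤ := ((t : ℤ) - 1) * (4 * C)
  refine ⟨(Fq ×ˢ Finset.Icc (-(3 * C : ℤ)) (3 * C)).image fun p => σ p.1 * z ^ p.2, ?_,
    fun k => σ (gq (finProdFinEquiv.symm k).2) * z ^ shift (finProdFinEquiv.symm k).1, ?_⟩
  · exact Finset.mem_image.mpr ⟨(1, 0), by simp [h1Fq], by simp [hσ1]⟩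
  simp only [Finset.forall_mem_image, Finset.exists_mem_image, Prod.forall, Prod.exists,
    Finset.mem_product, Finset.mem_Icc, and_imp]
  intro p i₁ hp hi₁ hi₁' q i₂ hq hi₂ hi₂'
  obtain ⟨j, hj⟩ := hcov p hp q hq
  obtain ⟨t, ht⟩ := Int.exists_fin_three_natAbs_sub_le C (u := i₂ - i₁) (by omega)
  refine ⟨finProdFinEquiv (t, j), fun a ha => ?_⟩
  obtain ⟨f, hf, hfa⟩ := hj (π a) (Finset.mem_image_of_mem π ha)
  set w := (σ (gq j) * σ f)⁻¹ * (a * (σ p)⁻¹ * σ q)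
  have hw : w ∈ π.ker := by
    rw [MonoidHom.mem_ker, show π w = (gq j * f)⁻¹ * (π a * (p⁻¹ * q)) by
      simp [w, hσ _, mul_assoc], hfa, inv_mul_cancel]
  have hwD : w ∈ D := by
    refine Finset.mul_mem_mul (Finset.inv_mem_inv (Finset.mul_mem_mul ?_ ?_))
      (Finset.mul_mem_mul (Finset.mul_mem_mul ha (Finset.inv_mem_inv ?_)) ?_)
    exacts [Finset.mem_image_of_mem _ (Finset.mem_univ j), Finset.mem_image_of_mem σ hf,
      Finset.mem_image_of_mem σ hp, Finset.mem_image_of_mem σ hq]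
  obtain ⟨e, he, hze⟩ := hC w hwD (hker hw)
  have hdefect : a * (σ p)⁻¹ * σ q = σ (gq j) * σ f * z ^ e := by
    rw [hze, mul_inv_cancel_left]
  have hexp : (e + (i₂ - i₁) - shift t).natAbs ≤ 3 * C := by simp only [shift]; omega
  refine ⟨f, e + (i₂ - i₁) - shift t, ⟨hf, by omega, by omega⟩, ?_⟩
  simpa using mul_inv_mul_eq_mul_zpow_mul_mul_zpow hz hdefect i₁ i₂ (shift t)

theorem of_quotient_closure {s : Finset G} (hs : (s : Set G) ⊆ center G) {N : Subgroup G}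
    [N.Normal] (hN : closure (s : Set G) = N) {m : ℕ} (h : HasTranslateCovers (G ⧸ N) m) :
    HasTranslateCovers G (3 ^ s.card * m) := by
  classical
  induction s using Finset.induction_on generalizing N m with
  | empty =>
    rw [Finset.coe_empty, Subgroup.closure_empty] at hN
    subst hN
    simpa using h.of_mulEquiv QuotientGroup.quotientBot
  | insert z s hzs ih =>
    have hs' : (s : Set G) ⊆ center G := fun x hx => hs (by simp [hx])
    have hz : z ∈ center G := hs (by simp)
    have := Subgroup.normal_of_le_center (closure_le _ |>.mpr hs')
    have hle : closure (s : Set G) ≤ N := hN ▸ closure_mono (by simp)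
    set φ := QuotientGroup.map _ N (MonoidHom.id G) hle
    have hφ : Function.Surjective φ :=
      QuotientGroup.map_surjective_of_surjective _ N _ QuotientGroup.mk_surjective hle
    have hker : φ.ker ≤ zpowers (z : G ⧸ closure (s : Set G)) := by
      rw [QuotientGroup.ker_map _ _ _ hle, Subgroup.comap_id, ← hN, MonoidHom.map_closure,
        closure_le]
      rintro _ ⟨x, hx, rfl⟩
      rcases Finset.mem_insert.mp hx with rfl | hx
      · exact mem_zpowers _
      · simp [(QuotientGroup.eq_one_iff x).mpr (subset_closure hx), one_mem]
    have := ih hs' rfl (h.of_surjective_of_ker_le_zpowers hφ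
      (MonoidHom.map_mem_center (QuotientGroup.mk'_surjective _) hz) hker)
    rwa [Finset.card_insert_of_notMem hzs, pow_succ, mul_assoc]

end HasTranslateCovers

theorem exists_hasTranslateCovers_of_lowerCentralSeries_eq_bot {G : Type*} [Group G]
    [Group.FG G] {c : ℕ} (hc : (⊤ : Subgroup G).lowerCentralSeries c = ⊥) :
    ∃ m, HasTranslateCovers G m := by
  induction c generalizing G with
  | zero =>
    have := Subgroup.subsingleton_iff.mp (subsingleton_of_bot_eq_top hc.symm)
    exact ⟨1, .of_subsingleton⟩
  | succ c ih =>
    obtain ⟨S, hS, hSfin⟩ := Group.fg_iff.mp ‹Group.FG G›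
    have hcen : leftNormedCommutators S c ⊆ center G :=
      (leftNormedCommutators_subset_lowerCentralSeries S c).trans
        (commutator_top_right_eq_bot_iff_le_center.mp hc)
    have := Subgroup.normal_of_le_center (closure_le _ |>.mpr hcen)
    have hq :
        (⊤ : Subgroup (G ⧸ closure (leftNormedCommutators S c))).lowerCentralSeries c = ⊥ := by
      rw [← map_top_lowerCentralSeries (QuotientGroup.mk'_surjective _), Subgroup.map_eq_bot_iff,
        QuotientGroup.ker_mk']
      simpa only [hc, sup_bot_eq] using
        lowerCentralSeries_le_closure_leftNormedCommutators_sup hS c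
    obtain ⟨m, hm⟩ := ih hq
    have hfin := leftNormedCommutators_finite hSfin c
    exact ⟨_, hm.of_quotient_closure (s := hfin.toFinset) (by simpa using hcen) (by simp)⟩

/-- Lemma 6.1 (growth lemma for nilpotent groups): for a finitely generated
nilpotent group `G` there is `m ∈ ℕ` such that for every finite `M ⊆ G` there are
a finite set `F ∋ 1` and elements `g_1, …, g_m` such that for every
`x ∈ F⁻¹F` there is `j` with `M·x ⊆ g_j·F`. -/
theorem stmt_12 {G : Type*} [Group G] [Group.IsNilpotent G] (hfg : Group.FG G) :
    ∃ m : ℕ, ∀ M : Finset G, ∃ F : Finset G, (1 : G) ∈ F ∧ ∃ g : Fin m → G,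
      ∀ f₁ ∈ F, ∀ f₂ ∈ F, ∃ j : Fin m, ∀ a ∈ M, ∃ f ∈ F,
        a * (f₁⁻¹ * f₂) = g j * f := by
  obtain ⟨c, hc⟩ := Subgroup.nilpotent_iff_lowerCentralSeries.mp ‹Group.IsNilpotent G›
  exact exists_hasTranslateCovers_of_lowerCentralSeries_eq_bot hc
end

section
/- Let G be a countable discrete group, X a locally compact Hausdorff space, α : G ↷ X a free action by homeomorphisms, and let ᾱ denote the induced action on the commutative C*-algebra C₀(X) of continuous complex-valued functions on X vanishing at infinity, given by ᾱ_g(f) = f ∘ α_{g⁻¹}. Let d ∈ ℕ. Then the following are equivalent. (I) For every ε > 0 and all finite subsets M ⊆ G and F ⊆ C₀(X), there exist finitely supported maps μ^{(l)} : G → C₀(X) for l = 0,…,d, each μ^{(l)}_g a positive contraction (pointwise real-valued with values in [0,1]), satisfying: (a) ‖(∑_{l=0}^{d} ∑_{g∈G} μ^{(l)}_g)·a − a‖ ≤ ε for every a ∈ F; (b) μ^{(l)}_g · μ^{(l)}_h = 0 for every l and all g ≠ h in G; (c) ‖∑_{h∈E} (ᾱ_g(μ^{(l)}_h) − μ^{(l)}_{g·h})·a‖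 ≤ ε for every a ∈ F, every l, every g ∈ M and every finite subset E ⊆ G; (d) ‖[∑_{g∈E} μ^{(l)}_g, a]‖ ≤ ε for every a ∈ F, every l and every finite E ⊆ G (automatic here by commutativity). (II) For every ε > 0, every finite M ⊆ G and every compact subset K ⊆ X, there exist finitely supported maps μ^{(l)} : G → C_c(X) for l = 0,…,d, each μ^{(l)}_g a compactly supported continuous function with values in [0,1], satisfying: (a') ∑_{l=0}^{d} ∑_{g∈G} μ^{(l)}_g ≤ 1 pointwise and ∑_{l=0}^{d} ∑_{g∈G} μ^{(l)}_g(x) = 1 for every x ∈ K; (b') μ^{(l)}_g · μ^{(l)}_h = 0 for every l and all g ≠ h in G; (c') ‖μ^{(l)}_h ∘ α_{g⁻¹} − μ^{(l)}_{g·h}‖_∞ ≤ ε for every l, every g ∈ M and every h ∈ G. -/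
open scoped ZeroAtInfty Pointwise
open Function Set

/-!
(II) ⇒ (I): the functions of (II), viewed in `C₀(X, ℂ)`, already work. For `a ∈ F` the error in
(a) is confined to where `‖a‖ < ε`, outside a compact set on which the sum is `1`; by
orthogonality each sum in (c) has at most one nonzero term on either side, so (c) follows from (c')
once `ε` is divided by a bound for `‖a‖`.

(I) ⇒ (II): averaging `N` bump functions along a chain of compact sets, each absorbing the
`M`-translates of the support of the previous one, gives `t` equal to `1` on `K` and `1/N`-almost
`M`-invariant. Apply (I) to one function equal to `1` on the support of `t` and take real parts
`ν`. The family `t ν / max (∑ ν) (1/2)` is then a partition as in (II): on `K` the total sum is at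
least `1 - δ`, so the quotient is exactly `1` there, and (c) for a single `E = {g h}` and for `E`
covering all supports makes both `ν` and `∑ ν` almost equivariant where `t ≠ 0`.
-/

lemma abs_mul_sub_mul_le {a b c e : ℝ} (ha : 0 ≤ a) (he : e ∈ Icc (0 : ℝ) 1) :
    |a * b - c * e| ≤ a * |b - e| + |a - c| := by
  have hdecomp : a * b - c * e = a * (b - e) + (a - c) * e := by ring
  calc |a * b - c * e| ≤ |a * (b - e)| + |(a - c) * e| := hdecomp ▸ abs_add_le _ _
    _ ≤ a * |b - e| + |a - c| := by
      rw [abs_mul, abs_mul, abs_of_nonneg ha, abs_of_nonneg he.1]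
      gcongr
      exact mul_le_of_le_one_right (abs_nonneg _) he.2

lemma abs_div_sub_div_le {p q m m' δ D : ℝ} (hm : 1 / 2 ≤ m) (hq : q ∈ Icc 0 m')
    (hpq : |p - q| ≤ δ) (hmm' : |m - m'| ≤ D) : |p / m - q / m'| ≤ 2 * (δ + D) := by
  have hm0 : 0 < m := by linarith
  have hdecomp : p / m - q / m' = ((p - q) + q / m' * (m' - m)) / m := by
    rcases hq.1.eq_or_lt with rfl | hq0
    · simp
    · field_simp [(hq0.trans_le hq.2).ne']
      ring
  have hratio : |q / m'| ≤ 1 := by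
    rw [abs_div, abs_of_nonneg hq.1, abs_of_nonneg (hq.1.trans hq.2)]
    exact div_le_one_of_le₀ hq.2 (hq.1.trans hq.2)
  have hnum : |(p - q) + q / m' * (m' - m)| ≤ δ + D := by
    refine (abs_add_le _ _).trans (add_le_add hpq ?_)
    rw [abs_mul, abs_sub_comm]
    exact (mul_le_of_le_one_left (abs_nonneg _) hratio).trans hmm'
  rw [hdecomp, abs_div, abs_of_pos hm0, div_le_iff₀ hm0]
  nlinarith [abs_nonneg ((p - q) + q / m' * (m' - m))]

lemma sum_sub_sum_le_of_mul_eq_zero {ι : Type*} (E : Finset ι) {u v : ι → ℝ} {η : ℝ}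
    (hu : ∀ i j, i ≠ j → u i * u j = 0) (hv : ∀ i, 0 ≤ v i) (huv : ∀ i, u i - v i ≤ η)
    (hη : 0 ≤ η) : ∑ i ∈ E, u i - ∑ i ∈ E, v i ≤ η := by
  by_cases h : ∃ i ∈ E, u i ≠ 0
  · obtain ⟨i, hiE, hi⟩ := h
    have hsum : ∑ j ∈ E, u j = u i := Finset.sum_eq_single_of_mem i hiE fun j _ hji =>
      (mul_eq_zero.mp (hu j i hji)).resolve_right hi
    have := Finset.single_le_sum (fun j _ => hv j) hiE
    linarith [huv i]
  · push Not at h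
    rw [Finset.sum_eq_zero h]
    linarith [Finset.sum_nonneg fun j (_ : j ∈ E) => hv j]

lemma abs_sum_sub_sum_le_of_mul_eq_zero {ι : Type*} (E : Finset ι) {u v : ι → ℝ} {η : ℝ}
    (hu : ∀ i j, i ≠ j → u i * u j = 0) (hv : ∀ i j, i ≠ j → v i * v j = 0)
    (hu0 : ∀ i, 0 ≤ u i) (hv0 : ∀ i, 0 ≤ v i) (huv : ∀ i, |u i - v i| ≤ η) (hη : 0 ≤ η) :
    |∑ i ∈ E, u i - ∑ i ∈ E, v i| ≤ η :=
  abs_sub_le_iff.mpr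
    ⟨sum_sub_sum_le_of_mul_eq_zero E hu hv0 (fun i => (abs_sub_le_iff.mp (huv i)).1) hη,
     sum_sub_sum_le_of_mul_eq_zero E hv hu0 (fun i => (abs_sub_le_iff.mp (huv i)).2) hη⟩

lemma abs_finsum_sub_finsum_le {G : Type*} [Group G] {u v : G → ℝ} {δ : ℝ}
    (hu : (support u).Finite) (hv : (support v).Finite) (g : G)
    (h : ∀ E : Finset G, |∑ k ∈ E, (u k - v (g * k))| ≤ δ) :
    |∑ᶠ k, u k - ∑ᶠ k, v k| ≤ δ := by
  have hvg : (support fun k => v (g * k)).Finite :=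
    hv.preimage (mul_right_injective g).injOn
  rw [← finsum_comp_equiv (Equiv.mulLeft g) (f := v), Equiv.coe_mulLeft,
    ← finsum_sub_distrib hu hvg]
  rw [finsum_eq_sum _ (hu.union hvg |>.subset (support_sub _ _))]
  exact h _

lemma sum_range_le_sum_range_add_one {a b : ℕ → ℝ} (hab : ∀ n, a n ≤ b (n + 1))
    (hb : ∀ n, b n ∈ Icc (0 : ℝ) 1) (N : ℕ) :
    ∑ n ∈ Finset.range N, a n ≤ ∑ n ∈ Finset.range N, b n + 1 := by
  have hshift := Finset.sum_range_succ' b N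
  have hlast := Finset.sum_range_succ b N
  have := Finset.sum_le_sum fun n (_ : n ∈ Finset.range N) => hab n
  linarith [(hb 0).1, (hb N).2]

lemma exists_bump {X : Type*} [TopologicalSpace X] [RegularSpace X] [LocallyCompactSpace X]
    {K : Set X} (hK : IsCompact K) :
    ∃ f : C(X, ℝ), HasCompactSupport f ∧ (∀ x, f x ∈ Icc (0 : ℝ) 1) ∧ EqOn f 1 K := by
  obtain ⟨f, hf1, -, hfc, hfI⟩ :=
    exists_continuous_one_zero_of_isCompact hK isClosed_empty (disjoint_empty K)
  exact ⟨f, hfc, hfI, hf1⟩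

section Bump

variable {G X : Type*} [Group G] [TopologicalSpace X] [MulAction G X]
  [ContinuousConstSMul G X] [RegularSpace X] [LocallyCompactSpace X]

lemma exists_bump_seq (S : Finset G) {K : Set X} (hK : IsCompact K) :
    ∃ c : ℕ → C(X, ℝ), (∀ n, HasCompactSupport (c n)) ∧ (∀ n x, c n x ∈ Icc (0 : ℝ) 1) ∧
      EqOn (c 0) 1 K ∧ ∀ n, ∀ g ∈ S, ∀ x ∈ tsupport (c n), c (n + 1) (g • x) = 1 := by
  choose bump hbump_cs hbump_mem hbump_one using
    fun A : {A : Set X // IsCompact A} => exists_bump A.2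
  let next (A : {A : Set X // IsCompact A}) : {A : Set X // IsCompact A} :=
    ⟨⋃ g ∈ S, g • tsupport (bump A), S.isCompact_biUnion fun g _ => (hbump_cs A).smul g⟩
  refine ⟨fun n => bump (next^[n] ⟨K, hK⟩), fun n => hbump_cs _, fun n => hbump_mem _,
    hbump_one _, fun n g hg x hx => ?_⟩
  simp only [iterate_succ_apply']
  exact hbump_one _ (mem_biUnion hg (smul_mem_smul_set hx))

lemma exists_almost_invariant_bump (S : Finset G) {K : Set X} (hK : IsCompact K) (N : ℕ) :
    ∃ t : C(X, ℝ), HasCompactSupport t ∧ (∀ x, t x ∈ Icc (0 : ℝ) 1) ∧ EqOn t 1 K ∧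
      ∀ g ∈ S, ∀ x, |t (g • x) - t x| ≤ 1 / (N + 1) := by
  classical
  obtain ⟨c, hc_cs, hc_mem, hc_one, hc_succ⟩ := exists_bump_seq (insert 1 (S ∪ S⁻¹)) hK
  have hstep : ∀ g ∈ insert 1 (S ∪ S⁻¹), ∀ n x, c n x ≤ c (n + 1) (g • x) := by
    intro g hg n x
    by_cases hx : c n x = 0
    · rw [hx]; exact (hc_mem _ _).1
    · rw [hc_succ n g hg x (subset_tsupport _ hx)]; exact (hc_mem n x).2
  have hmono (x : X) : Monotone fun n => c n x :=
    monotone_nat_of_le_succ fun n => by simpa using hstep 1 (by simp) n x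
  have hN : (0 : ℝ) < N + 1 := by positivity
  let t : C(X, ℝ) := ⟨fun x => (∑ n ∈ Finset.range (N + 1), c n x) / (N + 1), by fun_prop⟩
  have ht_le (x : X) : t x ≤ c N x := by
    refine div_le_of_le_mul₀ hN.le (hc_mem N x).1 ?_
    calc ∑ n ∈ Finset.range (N + 1), c n x ≤ ∑ _n ∈ Finset.range (N + 1), c N x :=
          Finset.sum_le_sum fun n hn => hmono x (Nat.lt_succ_iff.mp (Finset.mem_range.mp hn))
      _ = c N x * (N + 1) := by simp [mul_comm]
  have ht_nonneg (x : X) : 0 ≤ t x :=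
    div_nonneg (Finset.sum_nonneg fun n _ => (hc_mem n x).1) hN.le
  have ht_smul : ∀ g ∈ insert 1 (S ∪ S⁻¹), ∀ x, t x ≤ t (g • x) + 1 / (N + 1) := by
    intro g hg x
    have := sum_range_le_sum_range_add_one (hstep g hg · x) (hc_mem · (g • x)) (N + 1)
    simp only [t, ContinuousMap.coe_mk, ← add_div]
    gcongr
  refine ⟨t, (hc_cs N).mono fun x hx h0 => hx (le_antisymm (h0 ▸ ht_le x) (ht_nonneg x)),
    fun x => ⟨ht_nonneg x, (ht_le x).trans (hc_mem N x).2⟩, fun x hx => ?_,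
    fun g hg x => abs_sub_le_iff.mpr ⟨?_, ?_⟩⟩
  · have hone : ∀ n, c n x = 1 := fun n =>
      le_antisymm (hc_mem n x).2 ((hc_one hx).symm.trans_le (hmono x n.zero_le))
    simp [t, hone, hN.ne']
  · linarith [inv_smul_smul g x ▸ ht_smul g⁻¹ (by simp [hg]) (g • x)]
  · linarith [ht_smul g (by simp [hg]) x]

end Bump

section FiniteFamily

variable {X : Type*} [TopologicalSpace X]

lemma finite_support_apply {ι : Type*} {f : ι → C(X, ℝ)} (hf : (support f).Finite) (x : X) :
    (support fun i => f i x).Finite :=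
  hf.subset fun i hi h0 => hi (by simp [h0])

lemma continuous_finsum_apply {ι : Type*} {f : ι → C(X, ℝ)} (hf : (support f).Finite) :
    Continuous fun x => ∑ᶠ i, f i x :=
  continuous_finsum (fun i => (f i).continuous) fun _ =>
    ⟨univ, Filter.univ_mem, hf.subset fun i ⟨_, hx, _⟩ h0 => hx (by simp [h0])⟩

lemma apply_le_sum_finsum {ι κ : Type*} [Fintype ι] {ν : ι → κ → C(X, ℝ)}
    (hsupp : ∀ l, (support (ν l)).Finite) (hν : ∀ l g x, 0 ≤ ν l g x) (l : ι) (g : κ) (x : X) :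
    ν l g x ≤ ∑ l, ∑ᶠ g, ν l g x :=
  (single_le_finsum g (finite_support_apply (hsupp l) x) fun h => hν l h x).trans
    (Finset.single_le_sum (f := fun l => ∑ᶠ g, ν l g x)
      (fun l _ => finsum_nonneg fun h => hν l h x) (Finset.mem_univ l))

lemma abs_sum_finsum_sub_sum_finsum_le {ι G : Type*} [Group G] [Fintype ι] {ν : ι → G → C(X, ℝ)}
    (hsupp : ∀ l, (support (ν l)).Finite) {g : G} {x y : X} {δ : ℝ}
    (h : ∀ l (E : Finset G), |∑ k ∈ E, (ν l k x - ν l (g * k) y)| ≤ δ) :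
    |∑ l, ∑ᶠ k, ν l k x - ∑ l, ∑ᶠ k, ν l k y| ≤ Fintype.card ι * δ := by
  rw [← Finset.sum_sub_distrib]
  refine (Finset.abs_sum_le_sum_abs _ _).trans ?_
  refine (Finset.sum_le_sum fun l _ => abs_finsum_sub_finsum_le
    (finite_support_apply (hsupp l) x) (finite_support_apply (hsupp l) y) g (h l)).trans_eq ?_
  simp

end FiniteFamily

section Partition

variable {G X : Type*} [Group G] [TopologicalSpace X] [MulAction G X]

variable (d : ℕ) in
def IsAlmostEquivariantPartition (ε : ℝ) (M : Finset G) (K : Set X)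
    (μ : Fin (d + 1) → G → C(X, ℝ)) : Prop :=
  (∀ l, (Function.support (μ l)).Finite) ∧
  (∀ l g, HasCompactSupport ⇑(μ l g)) ∧
  (∀ l g x, μ l g x ∈ Set.Icc (0 : ℝ) 1) ∧
  (∀ x : X, (∑ l : Fin (d + 1), ∑ᶠ g : G, μ l g x) ≤ 1) ∧
  (∀ x ∈ K, (∑ l : Fin (d + 1), ∑ᶠ g : G, μ l g x) = 1) ∧
  (∀ l, ∀ g h : G, g ≠ h → ∀ x : X, μ l g x * μ l h x = 0) ∧
  (∀ l, ∀ g ∈ M, ∀ h : G, ∀ x : X, |μ l h (g⁻¹ • x) - μ l (g * h) x| ≤ ε)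

variable {d : ℕ} {ν : Fin (d + 1) → G → C(X, ℝ)} {t : C(X, ℝ)} {M : Finset G} {K : Set X}
  {δ η ε : ℝ}

theorem exists_isAlmostEquivariantPartition (hsupp : ∀ l, (support (ν l)).Finite)
    (hmem : ∀ l g x, ν l g x ∈ Icc (0 : ℝ) 1)
    (horth : ∀ l, ∀ g h : G, g ≠ h → ∀ x, ν l g x * ν l h x = 0)
    (ht_cs : HasCompactSupport t) (ht_mem : ∀ x, t x ∈ Icc (0 : ℝ) 1) (ht_one : EqOn t 1 K)
    (htM : ∀ g ∈ M, ∀ x, |t (g⁻¹ • x) - t x| ≤ η)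
    (hK : ∀ x ∈ K, 1 / 2 ≤ ∑ l, ∑ᶠ g, ν l g x) (hδ : 0 ≤ δ)
    (hM : ∀ g ∈ M, ∀ x, t (g⁻¹ • x) ≠ 0 → ∀ l (E : Finset G),
      |∑ h ∈ E, (ν l h x - ν l (g⁻¹ * h) (g⁻¹ • x))| ≤ δ)
    (hε : 2 * (d + 2) * δ + η ≤ ε) :
    ∃ μ, IsAlmostEquivariantPartition d ε M K μ := by
  set s : X → ℝ := fun x => ∑ l, ∑ᶠ g, ν l g x with hs
  set m : X → ℝ := fun x => max (s x) (1 / 2) with hm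
  have hm_pos (x : X) : 0 < m x := lt_max_of_lt_right (by norm_num)
  let w : C(X, ℝ) := ⟨fun x => t x / m x, t.continuous.div
    ((continuous_finsetSum _ fun l _ => continuous_finsum_apply (hsupp l)).max continuous_const)
    fun x => (hm_pos x).ne'⟩
  have hν_le (l g x) : ν l g x ≤ s x :=
    apply_le_sum_finsum hsupp (fun l g x => (hmem l g x).1) l g x
  have hsum (x : X) : ∑ l, ∑ᶠ g, (w * ν l g) x = t x * (s x / m x) := by
    simp only [ContinuousMap.mul_apply, ← mul_finsum, ← Finset.mul_sum, w,
      ContinuousMap.coe_mk, hs]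
    ring
  have hs_nonneg (x : X) : 0 ≤ s x :=
    Finset.sum_nonneg fun l _ => finsum_nonneg fun g => (hmem l g x).1
  have hratio (x : X) {r : ℝ} (hr : r ∈ Icc 0 (s x)) : r / m x ∈ Icc (0 : ℝ) 1 :=
    ⟨div_nonneg hr.1 (hm_pos x).le, div_le_one_of_le₀ (hr.2.trans (le_max_left _ _))
      (hm_pos x).le⟩
  have hequi : ∀ g ∈ M, ∀ l h x,
      t (g⁻¹ • x) * |ν l h (g⁻¹ • x) / m (g⁻¹ • x) - ν l (g * h) x / m x| ≤ 2 * (d + 2) * δ := by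
    intro g hg l h x
    by_cases hy : t (g⁻¹ • x) = 0
    · rw [hy, zero_mul]; positivity
    have hsingle : |ν l h (g⁻¹ • x) - ν l (g * h) x| ≤ δ := by
      simpa [abs_sub_comm] using hM g hg x hy l {g * h}
    have htotal : |m (g⁻¹ • x) - m x| ≤ (d + 1) * δ := by
      refine (abs_max_sub_max_le_abs _ _ _).trans ?_
      rw [abs_sub_comm]
      simpa using abs_sum_finsum_sub_sum_finsum_le hsupp (hM g hg x hy)
    have := abs_div_sub_div_le (le_max_right _ _) ⟨(hmem l (g * h) x).1, (hν_le _ _ _).trans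
      (le_max_left _ _)⟩ hsingle htotal
    calc t (g⁻¹ • x) * |ν l h (g⁻¹ • x) / m (g⁻¹ • x) - ν l (g * h) x / m x|
        ≤ 1 * (2 * (δ + (d + 1) * δ)) :=
          mul_le_mul (ht_mem _).2 this (abs_nonneg _) zero_le_one
      _ = 2 * (d + 2) * δ := by ring
  refine ⟨fun l g => w * ν l g, fun l => (hsupp l).subset fun g hg h0 => hg (by simp [h0]),
    fun l g => ht_cs.mono fun x hx h0 => hx (by simp [w, h0]), fun l g x => ?_, fun x => ?_,
    fun x hx => ?_, fun l g h hgh x => ?_, fun l g hg h x => ?_⟩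
  · have := hratio x ⟨(hmem l g x).1, hν_le l g x⟩
    simp only [ContinuousMap.mul_apply, w, ContinuousMap.coe_mk, div_mul_eq_mul_div, mul_div_assoc]
    exact ⟨mul_nonneg (ht_mem x).1 this.1, mul_le_one₀ (ht_mem x).2 this.1 this.2⟩
  · have := hratio x ⟨hs_nonneg x, le_rfl⟩
    rw [hsum]
    exact mul_le_one₀ (ht_mem x).2 this.1 this.2
  · have hsx : 1 / 2 ≤ s x := hK x hx
    rw [hsum, ht_one hx, hm]
    simp only [max_eq_left hsx, Pi.one_apply, one_mul]
    exact div_self (by linarith)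
  · simp only [ContinuousMap.mul_apply]
    linear_combination (w x) ^ 2 * horth l g h hgh x
  · simp only [ContinuousMap.mul_apply, w, ContinuousMap.coe_mk, div_mul_eq_mul_div, mul_div_assoc]
    calc _ ≤ t (g⁻¹ • x) * |ν l h (g⁻¹ • x) / m (g⁻¹ • x) - ν l (g * h) x / m x|
          + |t (g⁻¹ • x) - t x| :=
          abs_mul_sub_mul_le (ht_mem _).1 (hratio x ⟨(hmem _ _ _).1, hν_le _ _ _⟩)
      _ ≤ ε := by linarith [hequi g hg l h x, htM g hg x]

end Partition

namespace ZeroAtInftyContinuousMap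

variable {X : Type*} [TopologicalSpace X]

def ofRealOfHasCompactSupport (f : C(X, ℝ)) (hf : HasCompactSupport f) : C₀(X, ℂ) where
  toFun x := f x
  continuous_toFun := Complex.continuous_ofReal.comp f.continuous
  zero_at_infty' := (hf.comp_left (g := Complex.ofReal) Complex.ofReal_zero).is_zero_at_infty

@[simp]
lemma ofRealOfHasCompactSupport_apply (f : C(X, ℝ)) (hf : HasCompactSupport f) (x : X) :
    ofRealOfHasCompactSupport f hf x = f x :=
  rfl

lemma isCompact_setOf_le_norm {E : Type*} [NormedAddCommGroup E] (a : C₀(X, E)) {ε : ℝ}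
    (hε : 0 < ε) : IsCompact {x | ε ≤ ‖a x‖} := by
  obtain ⟨K, hK, hsub⟩ := Filter.mem_cocompact'.mp <|
    (zero_at_infty a).eventually (eventually_norm_sub_lt 0 hε)
  exact hK.of_isClosed_subset (isClosed_le continuous_const (map_continuous a).norm)
    fun x hx => hsub fun h => not_lt.mpr hx (by simpa using h)

end ZeroAtInftyContinuousMap

section AmenDim

open ZeroAtInftyContinuousMap

variable {G X : Type*} [Group G] [TopologicalSpace X] [MulAction G X]

variable (d : ℕ) in
/-- The witnesses of Definition 6.1 for `ᾱ` on `C₀(X)`, with `ᾱ_g(f) = f ∘ α_{g⁻¹}` evaluated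
pointwise as `f (g⁻¹ • x)`. -/
def IsAmenDimFamily (ε : ℝ) (M : Finset G) (F : Finset C₀(X, ℂ))
    (μ : Fin (d + 1) → G → C₀(X, ℂ)) : Prop :=
  (∀ l, (Function.support (μ l)).Finite) ∧
  (∀ l g x, (μ l g x).im = 0 ∧ (μ l g x).re ∈ Set.Icc (0 : ℝ) 1) ∧
  (∀ a ∈ F, ∀ x : X,
    ‖(∑ l : Fin (d + 1), ∑ᶠ g : G, μ l g x) * a x - a x‖ ≤ ε) ∧
  (∀ l, ∀ g h : G, g ≠ h → ∀ x : X, μ l g x * μ l h x = 0) ∧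
  (∀ a ∈ F, ∀ l, ∀ g ∈ M, ∀ E : Finset G, ∀ x : X,
    ‖(∑ h ∈ E, (μ l h (g⁻¹ • x) - μ l (g * h) x)) * a x‖ ≤ ε) ∧
  (∀ a ∈ F, ∀ l, ∀ E : Finset G, ∀ x : X,
    ‖(∑ g ∈ E, μ l g x) * a x - a x * (∑ g ∈ E, μ l g x)‖ ≤ ε)

variable (G X) in
def AmenDimLE (d : ℕ) : Prop :=
  ∀ ε > (0 : ℝ), ∀ M : Finset G, ∀ F : Finset C₀(X, ℂ), ∃ μ, IsAmenDimFamily d ε M F μ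

variable (G X) in
def HasAlmostEquivariantPartitions (d : ℕ) : Prop :=
  ∀ ε > (0 : ℝ), ∀ M : Finset G, ∀ K : Set X, IsCompact K →
    ∃ μ, IsAlmostEquivariantPartition d ε M K μ

variable {d : ℕ}

theorem amenDimLE_of_hasAlmostEquivariantPartitions (h : HasAlmostEquivariantPartitions G X d) :
    AmenDimLE G X d := by
  intro ε hε M F
  set C := 1 + ∑ a ∈ F, ‖a‖
  have hC : 0 < C := by positivity
  have haC : ∀ a ∈ F, ∀ x, ‖a x‖ ≤ C := fun a ha x =>
    ((a.toBCF.norm_coe_le_norm x).trans_eq norm_toBCF_eq_norm).trans <|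
      (Finset.single_le_sum (fun b _ => norm_nonneg b) ha).trans (le_add_of_nonneg_left zero_le_one)
  set K := ⋃ a ∈ F, {x | ε ≤ ‖a x‖}
  obtain ⟨ν, hsupp, hcs, hmem, hle, hone, horth, hequi⟩ :=
    h (ε / C) (by positivity) M K (F.isCompact_biUnion fun a _ => isCompact_setOf_le_norm a hε)
  have hsum (x : X) : ∑ l, ∑ᶠ g, ofRealOfHasCompactSupport (ν l g) (hcs l g) x =
      ((∑ l, ∑ᶠ g, ν l g x : ℝ) : ℂ) := by
    simp only [ofRealOfHasCompactSupport_apply, Complex.ofReal_sum]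
    exact Finset.sum_congr rfl fun l _ =>
      (map_finsum Complex.ofRealHom (finite_support_apply (hsupp l) x)).symm
  refine ⟨fun l g => ofRealOfHasCompactSupport (ν l g) (hcs l g),
    fun l => (hsupp l).subset fun g hg h0 => hg (by ext; simp [h0]), fun l g x => by simp [hmem],
    fun a ha x => ?_, fun l g h hgh x => by simp [← Complex.ofReal_mul, horth l g h hgh x],
    fun a ha l g hg E x => ?_, fun a _ l E x => by simp [mul_comm, hε.le]⟩
  · rw [hsum, ← sub_one_mul, norm_mul, ← Complex.ofReal_one, ← Complex.ofReal_sub,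
      Complex.norm_real, Real.norm_eq_abs]
    by_cases hx : x ∈ K
    · simp [hone x hx, hε.le]
    · have hax : ‖a x‖ < ε := by simpa [K] using fun h => hx (mem_biUnion ha h)
      have hσ : |∑ l, ∑ᶠ g, ν l g x - 1| ≤ 1 := abs_sub_le_iff.mpr ⟨by linarith [hle x],
        by linarith [Finset.sum_nonneg fun l (_ : l ∈ Finset.univ) =>
          finsum_nonneg fun g => (hmem l g x).1]⟩
      nlinarith [abs_nonneg (∑ l, ∑ᶠ g, ν l g x - 1), norm_nonneg (a x)]
  · have hdiff : |∑ h ∈ E, ν l h (g⁻¹ • x) - ∑ h ∈ E, ν l (g * h) x| ≤ ε / C :=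
      abs_sum_sub_sum_le_of_mul_eq_zero E (fun i j hij => horth l i j hij _)
        (fun i j hij => horth l _ _ (fun h => hij (mul_left_cancel h)) x)
        (fun i => (hmem _ _ _).1) (fun i => (hmem _ _ _).1) (hequi l g hg · x) (by positivity)
    simp only [ofRealOfHasCompactSupport_apply, ← Complex.ofReal_sub, ← Complex.ofReal_sum,
      Finset.sum_sub_distrib, norm_mul, Complex.norm_real, Real.norm_eq_abs]
    calc _ ≤ ε / C * C := mul_le_mul hdiff (haC a ha x) (norm_nonneg _) (by positivity)
      _ = ε := div_mul_cancel₀ ε hC.ne'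

theorem hasAlmostEquivariantPartitions_of_amenDimLE [ContinuousConstSMul G X] [RegularSpace X]
    [LocallyCompactSpace X] (h : AmenDimLE G X d) : HasAlmostEquivariantPartitions G X d := by
  classical
  intro ε hε M K hK
  obtain ⟨N, hN⟩ := exists_nat_one_div_lt (half_pos hε)
  set δ := min (1 / 2) (ε / (4 * (d + 2)))
  have hδ0 : 0 < δ := lt_min (by norm_num) (by positivity)
  have hδε : 2 * (d + 2) * δ ≤ ε / 2 := by
    have := min_le_right (1 / 2 : ℝ) (ε / (4 * (d + 2)))
    rw [le_div_iff₀ (by positivity)] at this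
    linarith
  obtain ⟨t, ht_cs, ht_mem, ht_one, htM⟩ := exists_almost_invariant_bump M⁻¹ hK N
  obtain ⟨a, ha_cs, -, ha_one⟩ := exists_bump ht_cs.isCompact
  set A := ofRealOfHasCompactSupport a ha_cs
  have hA (x : X) (hx : t x ≠ 0) : A x = 1 := by
    simp [A, ha_one (subset_tsupport _ hx)]
  obtain ⟨μ, hsupp, hval, happrox, horth, hequi, -⟩ := h δ hδ0 M⁻¹ {A}
  let ν (l : Fin (d + 1)) (g : G) : C(X, ℝ) := ⟨fun x => (μ l g x).re, by fun_prop⟩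
  have hfin (l : Fin (d + 1)) (x : X) : (support fun g => μ l g x).Finite :=
    (hsupp l).subset fun g hg h0 => hg (by simp [h0])
  refine exists_isAlmostEquivariantPartition (ν := ν)
    (fun l => (hsupp l).subset fun g hg h0 => hg (by ext; simp [ν, h0]))
    (fun l g x => (hval l g x).2) (fun l g h hgh x => ?_) ht_cs ht_mem ht_one
    (fun g hg x => htM g⁻¹ (Finset.inv_mem_inv hg) x) (fun x hx => ?_) hδ0.le
    (fun g hg x hx l E => ?_) (by linarith)
  · rcases mul_eq_zero.mp (horth l g h hgh x) with h0 | h0 <;> simp [ν, h0]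
  · have hre : (∑ l, ∑ᶠ g, μ l g x).re = ∑ l, ∑ᶠ g, ν l g x := by
      simp only [Complex.re_sum]
      exact Finset.sum_congr rfl fun l _ => map_finsum Complex.reAddGroupHom (hfin l x)
    have := (Complex.abs_re_le_norm _).trans (happrox A (Finset.mem_singleton_self A) x)
    rw [hA x (by simp [ht_one hx]), mul_one, Complex.sub_re, Complex.one_re, hre,
      abs_sub_le_iff] at this
    linarith [min_le_left (1 / 2 : ℝ) (ε / (4 * (d + 2)))]
  · have := hequi A (Finset.mem_singleton_self A) l g⁻¹ (Finset.inv_mem_inv hg) E (g⁻¹ • x)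
    rw [inv_inv, smul_inv_smul, hA _ hx, mul_one] at this
    simpa [ν, Complex.re_sum] using (Complex.abs_re_le_norm _).trans this

end AmenDim

theorem stmt_14_general {G : Type*} [Group G]
    {X : Type*} [TopologicalSpace X] [LocallyCompactSpace X] [T2Space X]
    [MulAction G X] (hcont : ∀ g : G, Continuous (fun x : X => g • x))
    (d : ℕ) :
    (∀ ε > (0 : ℝ), ∀ M : Finset G, ∀ F : Finset C₀(X, ℂ),
        ∃ μ : Fin (d + 1) → G → C₀(X, ℂ),
          (∀ l, (Function.support (μ l)).Finite) ∧
          (∀ l g x, (μ l g x).im = 0 ∧ (μ l g x).re ∈ Set.Icc (0 : ℝ) 1) ∧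
          (∀ a ∈ F, ∀ x : X,
            ‖(∑ l : Fin (d + 1), ∑ᶠ g : G, μ l g x) * a x - a x‖ ≤ ε) ∧
          (∀ l, ∀ g h : G, g ≠ h → ∀ x : X, μ l g x * μ l h x = 0) ∧
          (∀ a ∈ F, ∀ l, ∀ g ∈ M, ∀ E : Finset G, ∀ x : X,
            ‖(∑ h ∈ E, (μ l h (g⁻¹ • x) - μ l (g * h) x)) * a x‖ ≤ ε) ∧
          (∀ a ∈ F, ∀ l, ∀ E : Finset G, ∀ x : X,
            ‖(∑ g ∈ E, μ l g x) * a x - a x * (∑ g ∈ E, μ l g x)‖ ≤ ε)) ↔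
      (∀ ε > (0 : ℝ), ∀ M : Finset G, ∀ K : Set X, IsCompact K →
        ∃ μ : Fin (d + 1) → G → C(X, ℝ),
          (∀ l, (Function.support (μ l)).Finite) ∧
          (∀ l g, HasCompactSupport ⇑(μ l g)) ∧
          (∀ l g x, μ l g x ∈ Set.Icc (0 : ℝ) 1) ∧
          (∀ x : X, (∑ l : Fin (d + 1), ∑ᶠ g : G, μ l g x) ≤ 1) ∧
          (∀ x ∈ K, (∑ l : Fin (d + 1), ∑ᶠ g : G, μ l g x) = 1) ∧
          (∀ l, ∀ g h : G, g ≠ h → ∀ x : X, μ l g x * μ l h x = 0) ∧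
          (∀ l, ∀ g ∈ M, ∀ h : G, ∀ x : X,
            |μ l h (g⁻¹ • x) - μ l (g * h) x| ≤ ε)) := by
  have : ContinuousConstSMul G X := ⟨hcont⟩
  exact ⟨hasAlmostEquivariantPartitions_of_amenDimLE, amenDimLE_of_hasAlmostEquivariantPartitions⟩

/-- Lemma 5.3: for a free action of a countable discrete group `G` on a locally
compact Hausdorff space `X`, the amenability-dimension condition for the induced
action on `C₀(X)` (condition (I)) is equivalent to the existence of systems of
almost-equivariant, orthogonal, compactly supported `[0,1]`-valued functions
summing to one on compact sets (condition (II)). -/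
theorem stmt_14 {G : Type*} [Group G] [Countable G]
    {X : Type*} [TopologicalSpace X] [LocallyCompactSpace X] [T2Space X]
    [MulAction G X] (hcont : ∀ g : G, Continuous (fun x : X => g • x))
    (hfree : ∀ (g : G) (x : X), g • x = x → g = 1) (d : ℕ) :
    (∀ ε > (0 : ℝ), ∀ M : Finset G, ∀ F : Finset C₀(X, ℂ),
        ∃ μ : Fin (d + 1) → G → C₀(X, ℂ),
          (∀ l, (Function.support (μ l)).Finite) ∧
          (∀ l g x, (μ l g x).im = 0 ∧ (μ l g x).re ∈ Set.Icc (0 : ℝ) 1) ∧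
          (∀ a ∈ F, ∀ x : X,
            ‖(∑ l : Fin (d + 1), ∑ᶠ g : G, μ l g x) * a x - a x‖ ≤ ε) ∧
          (∀ l, ∀ g h : G, g ≠ h → ∀ x : X, μ l g x * μ l h x = 0) ∧
          (∀ a ∈ F, ∀ l, ∀ g ∈ M, ∀ E : Finset G, ∀ x : X,
            ‖(∑ h ∈ E, (μ l h (g⁻¹ • x) - μ l (g * h) x)) * a x‖ ≤ ε) ∧
          (∀ a ∈ F, ∀ l, ∀ E : Finset G, ∀ x : X,
            ‖(∑ g ∈ E, μ l g x) * a x - a x * (∑ g ∈ E, μ l g x)‖ ≤ ε)) ↔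
      (∀ ε > (0 : ℝ), ∀ M : Finset G, ∀ K : Set X, IsCompact K →
        ∃ μ : Fin (d + 1) → G → C(X, ℝ),
          (∀ l, (Function.support (μ l)).Finite) ∧
          (∀ l g, HasCompactSupport ⇑(μ l g)) ∧
          (∀ l g x, μ l g x ∈ Set.Icc (0 : ℝ) 1) ∧
          (∀ x : X, (∑ l : Fin (d + 1), ∑ᶠ g : G, μ l g x) ≤ 1) ∧
          (∀ x ∈ K, (∑ l : Fin (d + 1), ∑ᶠ g : G, μ l g x) = 1) ∧
          (∀ l, ∀ g h : G, g ≠ h → ∀ x : X, μ l g x * μ l h x = 0) ∧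
          (∀ l, ∀ g ∈ M, ∀ h : G, ∀ x : X,
            |μ l h (g⁻¹ • x) - μ l (g * h) x| ≤ ε)) :=
  stmt_14_general hcont d
end

section
/- Let G be a countable discrete group, X a compact Hausdorff space, α : G ↷ X a free action by homeomorphisms, and d ∈ ℕ. Suppose that for every ε > 0 and every finite subset M ⊆ G there exist finitely supported maps μ^{(l)} : G → C(X,[0,1]) for l = 0,…,d satisfying: (a) ∑_{l=0}^{d} ∑_{g∈G} μ^{(l)}_g(x) = 1 for every x ∈ X; (b) μ^{(l)}_g · μ^{(l)}_h = 0 for every l and all g ≠ h in G; (c) ‖μ^{(l)}_h ∘ α_{g⁻¹} − μ^{(l)}_{g·h}‖_∞ ≤ ε for every l, every g ∈ M and every h ∈ G. Then for every finite subset M ⊆ G there exist families 𝒰^{(0)}, …, 𝒰^{(d)} of open subsets of G × X (G carrying the discrete topology and G × X the product topology) such that, with Δ denoting the diagonal G-action Δ_g(h,x) = (h·g⁻¹, α_g(x)): (i) the union 𝒰 = 𝒰^{(0)} ∪ … ∪ 𝒰^{(d)} covers G × X; (ii) each family 𝒰^{(l)} is Δ-invariant (U ∈ 𝒰^{(l)}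 implies Δ_g(U) ∈ 𝒰^{(l)} for all g ∈ G) and its members are pairwise disjoint; in particular U ∩ Δ_g(U) = ∅ for every U ∈ 𝒰 and every g ≠ 1, so 𝒰 is a free G-cover of multiplicity at most d+1; (iii) for every h ∈ G and x ∈ X the set {(b·h, x) : b ∈ M} is contained in some member of 𝒰. -/
/-!
Take `ε = κ / 4` with `κ = 1 / (d + 1)`. At every point of `X` the `d + 1` orthogonal
families sum to `1`, and each family has at most one nonzero member there, so some
`μ l g` is at least `κ` at that point. The cover is made of the sets
`B l k = {(a, x) | κ / 2 < μ l (a * k) (a • x)}` (`superlevelSet (μ l) (κ / 2) k`):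
the diagonal action permutes them (`Δ_g (B l k) = B l (g * k)`), orthogonality makes
`B l k` and `B l k'` disjoint for `k ≠ k'`, and almost-equivariance loses at most `κ / 4`
when an `M`-translate is moved to the point where `μ l g ≥ κ`.
-/

open Set

theorem exists_finsum_eq_of_mul_eq_zero {α R : Type*} [Nonempty α]
    [NonUnitalNonAssocSemiring R] [NoZeroDivisors R] (f : α → R)
    (horth : ∀ a b, a ≠ b → f a * f b = 0) : ∃ a, ∑ᶠ b, f b = f a := by
  by_cases hzero : ∀ a, f a = 0
  · exact ⟨Classical.arbitrary α, by simp [hzero]⟩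
  obtain ⟨a, ha⟩ := not_forall.mp hzero
  refine ⟨a, finsum_eq_single f a fun b hb => ?_⟩
  exact (mul_eq_zero.mp (horth b a hb)).resolve_right ha

theorem exists_inv_card_le_of_sum_finsum_eq_one {ι α : Type*} [Fintype ι] [Nonempty ι]
    [Nonempty α] (f : ι → α → ℝ) (horth : ∀ i a b, a ≠ b → f i a * f i b = 0)
    (hsum : ∑ i, ∑ᶠ a, f i a = 1) : ∃ i a, (Fintype.card ι : ℝ)⁻¹ ≤ f i a := by
  choose a ha using fun i => exists_finsum_eq_of_mul_eq_zero (f i) (horth i)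
  have hle : ∑ _i : ι, (Fintype.card ι : ℝ)⁻¹ ≤ ∑ i, f i (a i) := by
    simp [← ha, hsum]
  obtain ⟨i, -, hi⟩ := Finset.exists_le_of_sum_le Finset.univ_nonempty hle
  exact ⟨i, a i, hi⟩

section Diagonal

variable {G X : Type*} [Group G] [MulAction G X]

def diagonalSMul (g : G) (p : G × X) : G × X := (p.1 * g⁻¹, g • p.2)

variable [TopologicalSpace X] (φ : G → C(X, ℝ)) (c : ℝ)

def superlevelSet (k : G) : Set (G × X) := {p | c < φ (p.1 * k) (p.1 • p.2)}

variable {φ c}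

@[simp]
theorem mem_superlevelSet {k : G} {p : G × X} :
    p ∈ superlevelSet φ c k ↔ c < φ (p.1 * k) (p.1 • p.2) :=
  Iff.rfl

theorem mem_superlevelSet_inv_mul {p : G × X} {g : G} (h : c < φ g (p.1 • p.2)) :
    p ∈ superlevelSet φ c (p.1⁻¹ * g) := by
  simpa using h

theorem isOpen_superlevelSet [TopologicalSpace G] [DiscreteTopology G]
    [ContinuousConstSMul G X] (k : G) : IsOpen (superlevelSet φ c k) :=
  isOpen_lt continuous_const <| continuous_prod_of_discrete_left.mpr fun a =>
    (φ (a * k)).continuous.comp (continuous_const_smul a)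

theorem image_diagonalSMul_superlevelSet (g k : G) :
    diagonalSMul g '' superlevelSet φ c k = superlevelSet φ c (g * k) := by
  have hinv : Function.LeftInverse (diagonalSMul g⁻¹) (diagonalSMul (X := X) g) :=
    fun p => by simp [diagonalSMul]
  have hinv' : Function.RightInverse (diagonalSMul g⁻¹) (diagonalSMul (X := X) g) :=
    fun p => by simp [diagonalSMul]
  rw [image_eq_preimage_of_inverse hinv hinv']
  ext p
  simp [diagonalSMul, smul_smul, mul_assoc]

theorem superlevelSet_inter_eq_empty (hc : 0 ≤ c)
    (horth : ∀ g h, g ≠ h → ∀ x, φ g x * φ h x = 0) {k k' : G} (hkk' : k ≠ k') :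
    superlevelSet φ c k ∩ superlevelSet φ c k' = ∅ := by
  refine eq_empty_iff_forall_notMem.mpr fun p ⟨hk, hk'⟩ => ?_
  have hzero := horth (p.1 * k) (p.1 * k') (by simpa using hkk') (p.1 • p.2)
  rw [mem_superlevelSet] at hk hk'
  nlinarith

theorem mem_superlevelSet_of_almost_equivariant {M : Finset G} {ε : ℝ}
    (hequi : ∀ g ∈ M, ∀ h : G, ∀ x : X, |φ h (g⁻¹ • x) - φ (g * h) x| ≤ ε)
    {g h : G} {x : X} (hlarge : c + ε < φ g (h • x)) {b : G} (hb : b ∈ M) :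
    (b * h, x) ∈ superlevelSet φ c (h⁻¹ * g) := by
  have hclose := abs_le.mp (hequi b hb g (b • h • x))
  rw [inv_smul_smul] at hclose
  rw [mem_superlevelSet, mul_assoc, mul_inv_cancel_left, mul_smul]
  linarith [hclose.2]

end Diagonal

theorem stmt_15_general {G : Type*} [Group G]
    [TopologicalSpace G] [DiscreteTopology G]
    {X : Type*} [TopologicalSpace X]
    [MulAction G X] (hcont : ∀ g : G, Continuous (fun x : X => g • x))
    (d : ℕ)
    (hyp : ∀ ε > (0 : ℝ), ∀ M : Finset G, ∃ μ : Fin (d + 1) → G → C(X, ℝ),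
        (∀ l, (Function.support (μ l)).Finite) ∧
        (∀ l g x, μ l g x ∈ Set.Icc (0 : ℝ) 1) ∧
        (∀ x : X, ∑ l : Fin (d + 1), ∑ᶠ g : G, μ l g x = 1) ∧
        (∀ l, ∀ g h : G, g ≠ h → ∀ x : X, μ l g x * μ l h x = 0) ∧
        (∀ l, ∀ g ∈ M, ∀ h : G, ∀ x : X,
          |μ l h (g⁻¹ • x) - μ l (g * h) x| ≤ ε)) :
    ∀ M : Finset G, ∃ U : Fin (d + 1) → Set (Set (G × X)),
      (∀ l, ∀ A ∈ U l, IsOpen A) ∧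
      (⋃ l, ⋃₀ U l) = Set.univ ∧
      (∀ l, ∀ A ∈ U l, ∀ g : G,
        (fun p : G × X => (p.1 * g⁻¹, g • p.2)) '' A ∈ U l) ∧
      (∀ l, ∀ A ∈ U l, ∀ B ∈ U l, A ≠ B → A ∩ B = ∅) ∧
      (∀ l, ∀ A ∈ U l, ∀ g : G, g ≠ 1 →
        A ∩ ((fun p : G × X => (p.1 * g⁻¹, g • p.2)) '' A) = ∅) ∧
      (∀ (h : G) (x : X), ∃ l, ∃ A ∈ U l, ∀ b ∈ M, ((b * h, x) : G × X) ∈ A) := by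
  intro M
  have : ContinuousConstSMul G X := ⟨hcont⟩
  set κ : ℝ := (Fintype.card (Fin (d + 1)) : ℝ)⁻¹
  have hκ : 0 < κ := by positivity
  obtain ⟨μ, -, -, hsum, horth, hequi⟩ := hyp (κ / 4) (by positivity) M
  have hlarge : ∀ y, ∃ l g, κ ≤ μ l g y := fun y =>
    exists_inv_card_le_of_sum_finsum_eq_one (fun l g => μ l g y)
      (fun l g h hgh => horth l g h hgh y) (hsum y)
  have hdisj : ∀ l {k k' : G}, k ≠ k' →
      superlevelSet (μ l) (κ / 2) k ∩ superlevelSet (μ l) (κ / 2) k' = ∅ :=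
    fun l _ _ => superlevelSet_inter_eq_empty (by positivity) (horth l)
  refine ⟨fun l => range (superlevelSet (μ l) (κ / 2)), ?_, ?_, ?_, ?_, ?_, ?_⟩
  · rintro l _ ⟨k, rfl⟩
    exact isOpen_superlevelSet k
  · refine eq_univ_of_forall fun p => ?_
    obtain ⟨l, g, hg⟩ := hlarge (p.1 • p.2)
    exact mem_iUnion_of_mem l ⟨_, mem_range_self _, mem_superlevelSet_inv_mul (g := g) (by linarith)⟩
  · rintro l _ ⟨k, rfl⟩ g
    exact ⟨g * k, (image_diagonalSMul_superlevelSet g k).symm⟩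
  · rintro l _ ⟨k, rfl⟩ _ ⟨k', rfl⟩ hne
    exact hdisj l fun hkk' => hne (congrArg _ hkk')
  · rintro l _ ⟨k, rfl⟩ g hg
    change _ ∩ diagonalSMul g '' _ = ∅
    rw [image_diagonalSMul_superlevelSet]
    exact hdisj l fun hk => hg (mul_eq_right.mp hk.symm)
  · intro h x
    obtain ⟨l, g, hg⟩ := hlarge (h • x)
    exact ⟨l, _, mem_range_self (h⁻¹ * g),
      fun b => mem_superlevelSet_of_almost_equivariant (hequi l) (by linarith)⟩

/-- Implication (3) ⇒ (1) of Lemma 6.3: almost-equivariant orthogonal partitions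
of unity for a free action on a compact Hausdorff space yield, for each finite
`M ⊆ G`, a free `G`-cover of `G × X` (for the diagonal action) consisting of
`d+1` invariant disjoint families, each `M × {x}` translate being contained in a
member of the cover. -/
theorem stmt_15 {G : Type*} [Group G] [Countable G]
    [TopologicalSpace G] [DiscreteTopology G]
    {X : Type*} [TopologicalSpace X] [CompactSpace X] [T2Space X]
    [MulAction G X] (hcont : ∀ g : G, Continuous (fun x : X => g • x))
    (hfree : ∀ (g : G) (x : X), g • x = x → g = 1) (d : ℕ)
    (hyp : ∀ ε > (0 : ℝ), ∀ M : Finset G, ∃ μ : Fin (d + 1) → G → C(X, ℝ),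
        (∀ l, (Function.support (μ l)).Finite) ∧
        (∀ l g x, μ l g x ∈ Set.Icc (0 : ℝ) 1) ∧
        (∀ x : X, ∑ l : Fin (d + 1), ∑ᶠ g : G, μ l g x = 1) ∧
        (∀ l, ∀ g h : G, g ≠ h → ∀ x : X, μ l g x * μ l h x = 0) ∧
        (∀ l, ∀ g ∈ M, ∀ h : G, ∀ x : X,
          |μ l h (g⁻¹ • x) - μ l (g * h) x| ≤ ε)) :
    ∀ M : Finset G, ∃ U : Fin (d + 1) → Set (Set (G × X)),
      (∀ l, ∀ A ∈ U l, IsOpen A) ∧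
      (⋃ l, ⋃₀ U l) = Set.univ ∧
      (∀ l, ∀ A ∈ U l, ∀ g : G,
        (fun p : G × X => (p.1 * g⁻¹, g • p.2)) '' A ∈ U l) ∧
      (∀ l, ∀ A ∈ U l, ∀ B ∈ U l, A ≠ B → A ∩ B = ∅) ∧
      (∀ l, ∀ A ∈ U l, ∀ g : G, g ≠ 1 →
        A ∩ ((fun p : G × X => (p.1 * g⁻¹, g • p.2)) '' A) = ∅) ∧
      (∀ (h : G) (x : X), ∃ l, ∃ A ∈ U l, ∀ b ∈ M, ((b * h, x) : G × X) ∈ A) :=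
  stmt_15_general hcont d hyp
end
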